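/- arXiv:1205.0413 — 9 statements merged into one kernel-verified Lean document; each statement's English description precedes it below -/
import Mathlib

section
/- Let x ≥ 2 and let 𝒫 be a set of primes ≤ x, with ℰ the complement (primes ≤ x not in 𝒫). Then the sum of 1/n over all n ≤ x whose prime factors all lie in 𝒫 is at least (∑_{n ≤ x} 1/n) · ∏_{p ∈ ℰ} (1 - 1/p). -/
/-!
Removing the multiples of `q` from a divisor-closed set `S` costs at most a fraction `1/q` of
its harmonic weight `∑ 1/n`: the map `n ↦ n / q` sends the multiples of `q` in `S` injectively
back into `S` and multiplies `1/n` by `q`. Sieving `{1, …, ⌊x⌋}` successively by the primes of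
`ℰ` keeps the sets divisor-closed, so the weight drops at most by the factor `∏ (1 - 1/p)`; what
survives is exactly the set of `n ≤ x` all of whose prime factors lie in `𝒫`.
-/

open Finset

lemma sum_filter_dvd_one_div_le {S : Finset ℕ} {q : ℕ} (hS : ∀ n ∈ S, q ∣ n → n / q ∈ S) :
    ∑ n ∈ S with q ∣ n, (1 : ℝ) / n ≤ 1 / q * ∑ n ∈ S, (1 : ℝ) / n := by
  have h_inj : Set.InjOn (· / q) (S.filter (q ∣ ·)) := fun a ha b hb hab =>
    (Nat.div_left_inj (mem_filter.mp ha).2 (mem_filter.mp hb).2).mp hab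
  calc ∑ n ∈ S with q ∣ n, (1 : ℝ) / n
      = ∑ n ∈ S with q ∣ n, 1 / (q : ℝ) * (1 / ((n / q : ℕ) : ℝ)) := by
        refine sum_congr rfl fun n hn => ?_
        obtain ⟨-, hqn⟩ := mem_filter.mp hn
        rcases eq_or_ne q 0 with rfl | hq
        · simp [zero_dvd_iff.mp hqn]
        · rw [Nat.cast_div_charZero hqn, one_div_div, ← mul_div_assoc, one_div_mul_cancel]
          exact_mod_cast hq
    _ = 1 / q * ∑ m ∈ (S.filter (q ∣ ·)).image (· / q), (1 : ℝ) / m := by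
        rw [mul_sum, sum_image h_inj]
    _ ≤ 1 / q * ∑ n ∈ S, (1 : ℝ) / n := by
        gcongr
        intro m hm
        obtain ⟨n, hn, rfl⟩ := mem_image.mp hm
        exact hS n (mem_filter.mp hn).1 (mem_filter.mp hn).2

lemma one_sub_one_div_mul_sum_le_sum_filter_not_dvd {S : Finset ℕ} {q : ℕ}
    (hS : ∀ n ∈ S, q ∣ n → n / q ∈ S) :
    (1 - 1 / (q : ℝ)) * ∑ n ∈ S, (1 : ℝ) / n ≤ ∑ n ∈ S with ¬q ∣ n, (1 : ℝ) / n := by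
  have h_split := sum_filter_add_sum_filter_not S (q ∣ ·) fun n => (1 : ℝ) / n
  linarith [sum_filter_dvd_one_div_le hS]

lemma one_sub_one_div_natCast_nonneg (q : ℕ) : 0 ≤ 1 - 1 / (q : ℝ) := by
  rcases q.eq_zero_or_pos with rfl | hq
  · simp
  · rw [sub_nonneg, div_le_one (by exact_mod_cast hq)]
    exact_mod_cast hq

lemma sum_one_div_mul_prod_le_sum_filter_forall_not_dvd {S : Finset ℕ}
    (hS : ∀ n ∈ S, ∀ d, d ∣ n → d ∈ S) (Q : Finset ℕ) :
    (∑ n ∈ S, (1 : ℝ) / n) * ∏ q ∈ Q, (1 - 1 / (q : ℝ)) ≤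
      ∑ n ∈ S with ∀ q ∈ Q, ¬q ∣ n, (1 : ℝ) / n := by
  induction Q using Finset.induction_on with
  | empty => simp
  | @insert q Q hqQ ih =>
    have h_closed : ∀ n ∈ S.filter (∀ p ∈ Q, ¬p ∣ ·), q ∣ n →
        n / q ∈ S.filter (∀ p ∈ Q, ¬p ∣ ·) := by
      intro n hn hqn
      obtain ⟨hnS, hnQ⟩ := mem_filter.mp hn
      have h_dvd : n / q ∣ n := Nat.div_dvd_of_dvd hqn
      exact mem_filter.mpr ⟨hS n hnS _ h_dvd, fun p hp hpd => hnQ p hp (hpd.trans h_dvd)⟩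
    calc (∑ n ∈ S, (1 : ℝ) / n) * ∏ p ∈ insert q Q, (1 - 1 / (p : ℝ))
        = (1 - 1 / (q : ℝ)) * ((∑ n ∈ S, (1 : ℝ) / n) * ∏ p ∈ Q, (1 - 1 / (p : ℝ))) := by
          rw [prod_insert hqQ]; ring
      _ ≤ (1 - 1 / (q : ℝ)) * ∑ n ∈ S with ∀ p ∈ Q, ¬p ∣ n, (1 : ℝ) / n :=
          mul_le_mul_of_nonneg_left ih (one_sub_one_div_natCast_nonneg q)
      _ ≤ ∑ n ∈ S.filter (∀ p ∈ Q, ¬p ∣ ·) with ¬q ∣ n, (1 : ℝ) / n :=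
          one_sub_one_div_mul_sum_le_sum_filter_not_dvd h_closed
      _ = ∑ n ∈ S with ∀ p ∈ insert q Q, ¬p ∣ n, (1 : ℝ) / n := by
          rw [filter_filter]
          refine sum_congr (filter_congr fun n _ => ?_) fun _ _ => rfl
          rw [forall_mem_insert, and_comm]

lemma mem_Icc_one_of_dvd {N n d : ℕ} (hn : n ∈ Icc 1 N) (hd : d ∣ n) : d ∈ Icc 1 N := by
  obtain ⟨hn1, hnN⟩ := mem_Icc.mp hn
  exact mem_Icc.mpr ⟨Nat.pos_of_dvd_of_pos hd hn1, (Nat.le_of_dvd hn1 hd).trans hnN⟩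

lemma forall_prime_dvd_mem_iff_forall_not_dvd {N n : ℕ} {P : Finset ℕ} (hn : n ∈ Icc 1 N) :
    (∀ p, p.Prime → p ∣ n → p ∈ P) ↔
      ∀ q ∈ (Icc 1 N).filter (fun p => p.Prime ∧ p ∉ P), ¬q ∣ n := by
  constructor
  · intro h q hq hqn
    exact (mem_filter.mp hq).2.2 (h q (mem_filter.mp hq).2.1 hqn)
  · intro h p hp hpn
    by_contra hpP
    exact h p (mem_filter.mpr ⟨mem_Icc_one_of_dvd hn hpn, hp, hpP⟩) hpn

open Finset Classical in
theorem stmt_0_general (x : ℝ) (P : Finset ℕ) :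
    ∑ n ∈ (Finset.Icc 1 ⌊x⌋₊).filter (fun n => ∀ p, p.Prime → p ∣ n → p ∈ P),
        (1 : ℝ) / n ≥
      (∑ n ∈ Finset.Icc 1 ⌊x⌋₊, (1 : ℝ) / n) *
        ∏ p ∈ (Finset.Icc 1 ⌊x⌋₊).filter (fun p => p.Prime ∧ p ∉ P), (1 - 1 / (p : ℝ)) := by
  rw [ge_iff_le, filter_congr fun n hn => forall_prime_dvd_mem_iff_forall_not_dvd hn]
  exact sum_one_div_mul_prod_le_sum_filter_forall_not_dvd (fun _ hn _ => mem_Icc_one_of_dvd hn) _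

open Finset Classical in
theorem stmt_0 (x : ℝ) (hx : 2 ≤ x) (P : Finset ℕ)
    (hP : ∀ p ∈ P, Nat.Prime p ∧ (p : ℝ) ≤ x) :
    ∑ n ∈ (Finset.Icc 1 ⌊x⌋₊).filter (fun n => ∀ p, p.Prime → p ∣ n → p ∈ P),
        (1 : ℝ) / n ≥
      (∑ n ∈ Finset.Icc 1 ⌊x⌋₊, (1 : ℝ) / n) *
        ∏ p ∈ (Finset.Icc 1 ⌊x⌋₊).filter (fun p => p.Prime ∧ p ∉ P), (1 - 1 / (p : ℝ)) :=
  stmt_0_general x P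
end

section
/- Let 0 < y ≤ z ≤ x be real numbers and let B be a finite nonempty set of real numbers contained in (y, z]. Assign a positive weight w(b) to each b ∈ B. Then there exists a positive integer k ≤ x/y such that ∑ over k-tuples (b₁,…,b_k) ∈ B^k with b₁+⋯+b_k ∈ (x−z, x] of w(b₁)⋯w(b_k) is at least (y/x)·(∑_{b∈B} w(b))^k. -/
/-!
Normalize the weights so that `∑ w = 1`, and let `a k` and `t k` be the probabilities that the sum
of `k` independent `w`-distributed draws from `B` lies in `(-∞, x]` and in `(x - z, x]`
respectively. Appending a draw `b ≤ z` to a tuple with sum `≤ x` keeps the sum `≤ x` unless that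
sum was already in `(x - z, x]`, so `a k ≤ a (k + 1) + t k`. Telescoping from `a 0 = 1` to
`a (N + 1) = 0`, where `N = ⌊x / y⌋` and every draw exceeds `y`, gives `t 1 + ⋯ + t N ≥ 1`,
hence `t k ≥ 1 / N ≥ y / x` for some `1 ≤ k ≤ N`.
-/

open Finset

theorem Fin.sum_piFinset_const_succ {α M : Type*} [AddCommMonoid M] {k : ℕ} (B : Finset α)
    (f : (Fin (k + 1) → α) → M) :
    ∑ t ∈ Fintype.piFinset (fun _ ↦ B), f t =
      ∑ b ∈ B, ∑ s ∈ Fintype.piFinset (fun _ : Fin k ↦ B), f (Fin.cons b s) := by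
  rw [← sum_product']
  refine sum_equiv (Fin.consEquiv fun _ ↦ α).symm (fun t ↦ ?_) (fun t _ ↦ ?_)
  · simp [Fin.forall_fin_succ, Fin.tail]
  · simp

open Classical in
noncomputable def tupleWeight (B : Finset ℝ) (w : ℝ → ℝ) (k : ℕ) (S : Set ℝ) : ℝ :=
  ∑ t ∈ (Fintype.piFinset fun _ : Fin k ↦ B).filter (fun t ↦ ∑ i, t i ∈ S), ∏ i, w (t i)

section tupleWeight

variable {B : Finset ℝ} {w : ℝ → ℝ} {k : ℕ} {S : Set ℝ}

open Classical in
theorem tupleWeight_zero : tupleWeight B w 0 S = if (0 : ℝ) ∈ S then 1 else 0 := by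
  split_ifs with h <;> simp [tupleWeight, h]

open Classical in
theorem tupleWeight_succ :
    tupleWeight B w (k + 1) S = ∑ b ∈ B, w b * tupleWeight B w k ((b + ·) ⁻¹' S) := by
  simp only [tupleWeight, sum_filter, Fin.sum_piFinset_const_succ, Fin.sum_cons,
    Fin.prod_univ_succ, Fin.cons_zero, Fin.cons_succ, mul_sum, mul_ite, mul_zero,
    Set.mem_preimage]

theorem tupleWeight_const_mul (c : ℝ) :
    tupleWeight B (fun b ↦ c * w b) k S = c ^ k * tupleWeight B w k S := by
  simp [tupleWeight, prod_mul_distrib, mul_sum]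

theorem tupleWeight_le_add_of_subset_union {S₁ S₂ : Set ℝ} (hw : ∀ b ∈ B, 0 ≤ w b)
    (h : S ⊆ S₁ ∪ S₂) :
    tupleWeight B w k S ≤ tupleWeight B w k S₁ + tupleWeight B w k S₂ := by
  classical
  simp only [tupleWeight, sum_filter, ← sum_add_distrib]
  refine sum_le_sum fun t ht ↦ ?_
  have : 0 ≤ ∏ i, w (t i) := prod_nonneg fun i _ ↦ hw _ (Fintype.mem_piFinset.mp ht i)
  have := @h (∑ i, t i)
  split_ifs <;> simp_all

theorem tupleWeight_eq_zero_of_subset_Iio {y : ℝ} (hB : ∀ b ∈ B, y ≤ b)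
    (hS : S ⊆ Set.Iio (k * y)) : tupleWeight B w k S = 0 := by
  classical
  unfold tupleWeight
  refine sum_eq_zero fun t ht ↦ absurd (hS (mem_filter.mp ht).2) ?_
  have := sum_le_sum fun i (_ : i ∈ univ) ↦ hB _ (Fintype.mem_piFinset.mp (mem_filter.mp ht).1 i)
  simp_all

theorem sum_mul_tupleWeight_Iic_le {x z : ℝ} (hw : ∀ b ∈ B, 0 ≤ w b) (hBz : ∀ b ∈ B, b ≤ z)
    (k : ℕ) :
    (∑ b ∈ B, w b) * tupleWeight B w k (Set.Iic x) ≤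
      tupleWeight B w (k + 1) (Set.Iic x) +
        (∑ b ∈ B, w b) * tupleWeight B w k (Set.Ioc (x - z) x) := by
  rw [tupleWeight_succ, sum_mul, sum_mul, ← sum_add_distrib]
  refine sum_le_sum fun b hb ↦ ?_
  rw [← mul_add]
  refine mul_le_mul_of_nonneg_left (tupleWeight_le_add_of_subset_union hw fun s hs ↦ ?_) (hw b hb)
  have := hBz b hb
  simp only [Set.mem_Iic, Set.mem_union, Set.mem_preimage, Set.mem_Ioc] at hs ⊢
  by_contra! h
  linarith [h.1, h.2 (by linarith)]

theorem exists_le_tupleWeight_Ioc {x y z : ℝ} (hw : ∀ b ∈ B, 0 ≤ w b)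
    (hw₁ : ∑ b ∈ B, w b = 1) (hy : 0 < y) (hyx : y ≤ x) (hzx : z ≤ x)
    (hB : ∀ b ∈ B, y ≤ b ∧ b ≤ z) :
    ∃ k : ℕ, 0 < k ∧ (k : ℝ) ≤ x / y ∧ y / x ≤ tupleWeight B w k (Set.Ioc (x - z) x) := by
  set a := fun k ↦ tupleWeight B w k (Set.Iic x)
  set t := fun k ↦ tupleWeight B w k (Set.Ioc (x - z) x)
  set N := ⌊x / y⌋₊
  have hN : (N : ℝ) ≤ x / y := Nat.floor_le (div_nonneg (hy.le.trans hyx) hy.le)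
  have hNpos : 0 < N := Nat.floor_pos.mpr ((one_le_div hy).mpr hyx)
  have ha₀ : a 0 = 1 := by simp [a, tupleWeight_zero, hy.le.trans hyx]
  have ha : a (N + 1) = 0 := tupleWeight_eq_zero_of_subset_Iio (fun b hb ↦ (hB b hb).1)
    fun s hs ↦ by
      have := Nat.lt_floor_add_one (x / y)
      rw [div_lt_iff₀ hy] at this
      push_cast
      exact lt_of_le_of_lt hs this
  have ht₀ : t 0 = 0 := by simp [t, tupleWeight_zero, hzx]
  have hstep (k : ℕ) : a k ≤ a (k + 1) + t k := by
    simpa [hw₁] using sum_mul_tupleWeight_Iic_le hw (fun b hb ↦ (hB b hb).2) k (x := x)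
  have htele : 1 ≤ ∑ k ∈ range N, t (k + 1) := calc
    1 = ∑ k ∈ range (N + 1), (a k - a (k + 1)) := by rw [sum_range_sub', ha₀, ha, sub_zero]
    _ ≤ ∑ k ∈ range (N + 1), t k := sum_le_sum fun k _ ↦ by linarith [hstep k]
    _ = ∑ k ∈ range N, t (k + 1) := by rw [sum_range_succ', ht₀, add_zero]
  have hconst : ∑ _k ∈ range N, y / x ≤ 1 := by
    rw [sum_const, card_range, nsmul_eq_mul, ← mul_div_assoc, div_le_one (hy.trans_le hyx),
      ← le_div_iff₀ hy]
    exact hN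
  obtain ⟨k, hk, hkt⟩ := exists_le_of_sum_le (nonempty_range_iff.mpr hNpos.ne')
    (hconst.trans htele)
  exact ⟨k + 1, k.succ_pos, le_trans (by exact_mod_cast mem_range.mp hk) hN, hkt⟩

end tupleWeight

open Finset Classical in
theorem stmt_2 (x y z : ℝ) (hy : 0 < y) (hyz : y ≤ z) (hzx : z ≤ x)
    (B : Finset ℝ) (hBne : B.Nonempty) (hB : ∀ b ∈ B, y < b ∧ b ≤ z)
    (w : ℝ → ℝ) (hw : ∀ b ∈ B, 0 < w b) :
    ∃ k : ℕ, 0 < k ∧ (k : ℝ) ≤ x / y ∧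
      ∑ t ∈ (Fintype.piFinset fun _ : Fin k => B).filter
          (fun t => x - z < ∑ i, t i ∧ ∑ i, t i ≤ x),
        ∏ i, w (t i) ≥ (y / x) * (∑ b ∈ B, w b) ^ k := by
  set W := ∑ b ∈ B, w b
  have hW : 0 < W := sum_pos hw hBne
  obtain ⟨k, hk, hkx, hkt⟩ := exists_le_tupleWeight_Ioc (w := fun b ↦ W⁻¹ * w b)
    (fun b hb ↦ by have := hw b hb; positivity) (by rw [← mul_sum, inv_mul_cancel₀ hW.ne'])
    hy (hyz.trans hzx) hzx fun b hb ↦ ⟨(hB b hb).1.le, (hB b hb).2⟩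
  refine ⟨k, hk, hkx, ?_⟩
  rw [tupleWeight_const_mul, inv_pow, ← div_eq_inv_mul, le_div_iff₀ (by positivity)] at hkt
  simpa [tupleWeight, Set.mem_Ioc] using hkt
end

section
/- Let 0 < y ≤ z ≤ x be real numbers and let B be a finite nonempty subset of (y, z]. Then there exists a positive integer k such that the number of k-tuples (b₁,…,b_k) ∈ B^k with b₁+⋯+b_k ∈ (x−z, x] is at least |B|^k · (y/x). -/
/-!
Read a tuple `(b₁, …, b_k) ∈ Bᵏ` as a walk `c, c + b₁, c + b₁ + b₂, …`. Its steps are at most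
`z`, so a walk that starts at or below `x - z` cannot jump over the window `(x - z, x]`; its steps
are at least `y`, so it passes `x - z` within `K` steps, where `K` is the least integer with
`K * y > x - z`, and then `K * y ≤ x`. Hence, for a uniformly random walk, the expected number of
visits to the window during the first `K` steps is at least `1` (induction on `K`, conditioning on
the first step), and some `k ≤ K` has visit probability at least `1 / K ≥ y / x`.
-/

open Finset

theorem Fintype.sum_piFinset_succ {M α : Type*} [AddCommMonoid M] {k : ℕ}
    (B : Finset α) (f : (Fin (k + 1) → α) → M) :
    ∑ t ∈ Fintype.piFinset (fun _ : Fin (k + 1) => B), f t =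
      ∑ b ∈ B, ∑ s ∈ Fintype.piFinset (fun _ : Fin k => B), f (Fin.cons b s) := by
  have h := filter_piFinset_eq_map_consEquiv (fun _ : Fin (k + 1) => B) (fun _ => True)
  simp only [filter_true] at h
  rw [h, sum_map, sum_product]
  rfl

open Classical in
noncomputable def hitCount {M : Type*} [AddCommMonoid M] (B : Finset M) (W : Set M) (c : M)
    (k : ℕ) : ℕ :=
  #{t ∈ Fintype.piFinset (fun _ : Fin k => B) | c + ∑ i, t i ∈ W}

section hitCount

variable {M : Type*} [AddCommMonoid M] {B : Finset M} {W : Set M} {c : M}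

theorem hitCount_zero_of_mem (hc : c ∈ W) : hitCount B W c 0 = 1 := by
  simp [hitCount, hc]

theorem hitCount_succ (k : ℕ) :
    hitCount B W c (k + 1) = ∑ b ∈ B, hitCount B W (c + b) k := by
  classical
  simp only [hitCount, card_filter, Fintype.sum_piFinset_succ, Fin.sum_cons, add_assoc]

end hitCount

theorem one_le_sum_hitCount_div_pow {B : Finset ℝ} (hB : B.Nonempty) {y z u c : ℝ}
    (hBy : ∀ b ∈ B, y ≤ b ∧ b ≤ z) {n : ℕ} (hc : c ≤ u - z) (hn : u - z < c + n * y) :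
    1 ≤ ∑ k ∈ range n, (hitCount B (Set.Ioc (u - z) u) c (k + 1) : ℝ) / (#B : ℝ) ^ (k + 1) := by
  set W := Set.Ioc (u - z) u
  induction n generalizing c with
  | zero => simp at hn; linarith
  | succ n ih =>
    have hm : (0 : ℝ) < #B := by exact_mod_cast hB.card_pos
    have hstep : ∀ b ∈ B,
        1 ≤ ∑ k ∈ range (n + 1), (hitCount B W (c + b) k : ℝ) / (#B : ℝ) ^ k := by
      intro b hb
      rw [sum_range_succ']
      have hrest : (0 : ℝ) ≤ ∑ k ∈ range n, (hitCount B W (c + b) (k + 1) : ℝ) / #B ^ (k + 1) :=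
        sum_nonneg fun _ _ => by positivity
      by_cases hW : c + b ∈ W
      · rw [hitCount_zero_of_mem hW, Nat.cast_one, pow_zero, div_one]
        linarith
      · have hcb : c + b ≤ u - z := not_lt.1 fun h => hW ⟨h, by linarith [(hBy b hb).2]⟩
        have hfirst : (0 : ℝ) ≤ hitCount B W (c + b) 0 / (#B : ℝ) ^ 0 := by positivity
        push_cast at hn
        linarith [ih hcb (by linarith [(hBy b hb).1])]
    calc (1 : ℝ) = (∑ _b ∈ B, 1) / #B := by simp [hm.ne']
      _ ≤ (∑ b ∈ B, ∑ k ∈ range (n + 1), (hitCount B W (c + b) k : ℝ) / (#B : ℝ) ^ k) / #B := by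
          gcongr with b hb; exact hstep b hb
      _ = _ := by
          simp only [hitCount_succ, Nat.cast_sum, sum_div, div_div, pow_succ]
          rw [sum_comm]

theorem exists_nat_mul_mem_Ioc {y a : ℝ} (hy : 0 < y) (ha : 0 ≤ a) :
    ∃ K : ℕ, 0 < K ∧ a < K * y ∧ K * y ≤ a + y := by
  refine ⟨⌊a / y⌋₊ + 1, Nat.succ_pos _, ?_, ?_⟩
  · rw [← div_lt_iff₀ hy]; exact_mod_cast Nat.lt_floor_add_one (a / y)
  · push_cast
    rw [add_one_mul, add_le_add_iff_right, ← le_div_iff₀ hy]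
    exact Nat.floor_le (div_nonneg ha hy.le)

open Finset Classical in
theorem stmt_3 (x y z : ℝ) (hy : 0 < y) (hyz : y ≤ z) (hzx : z ≤ x)
    (B : Finset ℝ) (hBne : B.Nonempty) (hB : ∀ b ∈ B, y < b ∧ b ≤ z) :
    ∃ k : ℕ, 0 < k ∧
      (((Fintype.piFinset fun _ : Fin k => B).filter
          (fun t => x - z < ∑ i, t i ∧ ∑ i, t i ≤ x)).card : ℝ) ≥
        (B.card : ℝ) ^ k * (y / x) := by
  obtain ⟨K, hK, hKlo, hKhi⟩ := exists_nat_mul_mem_Ioc hy (sub_nonneg.2 hzx)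
  have hsum := one_le_sum_hitCount_div_pow hBne (fun b hb => ⟨(hB b hb).1.le, (hB b hb).2⟩)
    (c := 0) (u := x) (n := K) (by linarith) (by linarith)
  obtain ⟨k, -, hk⟩ := exists_le_of_sum_le (nonempty_range_iff.2 hK.ne')
    (f := fun _ => (1 : ℝ) / K) (by simpa [(Nat.cast_pos.2 hK).ne'] using hsum)
  refine ⟨k + 1, k.succ_pos, ?_⟩
  have hcount : #{t ∈ Fintype.piFinset (fun _ : Fin (k + 1) => B) |
      x - z < ∑ i, t i ∧ ∑ i, t i ≤ x} = hitCount B (Set.Ioc (x - z) x) 0 (k + 1) := by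
    simp [hitCount, Set.mem_Ioc]
  have hyx : y / x ≤ 1 / K := by
    rw [div_le_div_iff₀ (by linarith) (by exact_mod_cast hK)]; linarith
  rw [hcount, ge_iff_le]
  calc (#B : ℝ) ^ (k + 1) * (y / x) ≤ #B ^ (k + 1) * (1 / K) := by gcongr
    _ ≤ _ := (le_div_iff₀' (by have := hBne.card_pos; positivity)).1 hk
end

section
/- Let 1 ≤ u ≤ v ≤ (log x)/e with x ≥ e, and let 𝒫 be a finite set of primes contained in (x^{1/(ev)}, x^{1/u}]. For any X ≥ x^{1/u}, there exists a positive integer ℓ ≤ K := (e v log X)/(log x) such that ∑ over ℓ-tuples (q₁,…,q_ℓ) ∈ 𝒫^ℓ with X·x^{−1/u} < q₁⋯q_ℓ ≤ X of 1/(q₁⋯q_ℓ) is at least (1/K)·(∑_{q∈𝒫} 1/q)^ℓ. -/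
/-!
Let `S = ∑_{q ∈ P} 1/q`, `Y = X x^{-1/u}`, and let `A_n` (resp. `B_n`) be the sum of `1/(q₁⋯qₙ)`
over `n`-tuples from `P` whose product is at most `Y` (resp. lies in `(Y, X]`). Every `q ∈ P` is
at most `x^{1/u}`, so prepending an element of `P` to a tuple counted by `A_n` yields one counted
by `A_{n+1}` or by `B_{n+1}`: `S A_n ≤ A_{n+1} + B_{n+1}`. Dividing by `S^{n+1}` and telescoping
from `A_0 = 1` to `A_L = 0`, where `L = ⌊K⌋` is large enough that every `L`-tuple has product
above `x^{L/(ev)} ≥ Y`, gives `∑_{ℓ=1}^{L} B_ℓ / S^ℓ ≥ 1`. Hence `B_ℓ ≥ S^ℓ / L ≥ S^ℓ / K` for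
some `1 ≤ ℓ ≤ L ≤ K`.
-/

open Finset

noncomputable def tupleReciprocalSum (P : Finset ℕ) (n : ℕ) (p : ℝ → Prop) [DecidablePred p] :
    ℝ :=
  ∑ q ∈ (Fintype.piFinset fun _ : Fin n => P).filter (fun q => p (∏ i, (q i : ℝ))),
    1 / ∏ i, (q i : ℝ)

section TupleReciprocalSum

variable {P : Finset ℕ} {n : ℕ} {p r s : ℝ → Prop} [DecidablePred p] [DecidablePred r]
  [DecidablePred s]

theorem tupleReciprocalSum_zero (hp : p 1) : tupleReciprocalSum P 0 p = 1 := by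
  simp [tupleReciprocalSum, hp]

theorem tupleReciprocalSum_succ :
    tupleReciprocalSum P (n + 1) p =
      ∑ a ∈ P, 1 / (a : ℝ) * tupleReciprocalSum P n (fun t => p (a * t)) := by
  have hcons : Fintype.piFinset (fun _ : Fin (n + 1) => P) =
      (P ×ˢ Fintype.piFinset fun _ : Fin n => P).map (Fin.consEquiv _).toEmbedding := by
    have h := filter_piFinset_eq_map_consEquiv (fun _ : Fin (n + 1) => P) (fun _ => True)
    simp only [filter_true_of_mem (fun _ _ => trivial)] at h
    exact h
  simp only [tupleReciprocalSum, sum_filter, hcons, sum_map, sum_product, mul_sum]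
  refine sum_congr rfl fun a _ => sum_congr rfl fun t _ => ?_
  simp [Fin.prod_univ_succ, Fin.consEquiv, mul_comm]

theorem tupleReciprocalSum_mono (h : ∀ t, p t → r t) :
    tupleReciprocalSum P n p ≤ tupleReciprocalSum P n r :=
  sum_le_sum_of_subset_of_nonneg (monotone_filter_right _ fun _ _ => h _)
    fun _ _ _ => by positivity

theorem tupleReciprocalSum_le_add (h : ∀ t, p t → r t ∨ s t) :
    tupleReciprocalSum P n p ≤ tupleReciprocalSum P n r + tupleReciprocalSum P n s := by
  simp only [tupleReciprocalSum, sum_filter, ← sum_add_distrib]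
  refine sum_le_sum fun q _ => ?_
  have hq : 0 ≤ 1 / ∏ i, (q i : ℝ) := by positivity
  split_ifs with hp hr hs hs <;> first | linarith | exact absurd (h _ hp) (by tauto)

theorem tupleReciprocalSum_le_eq_zero {c Y : ℝ} (hc : 0 < c) (hcP : ∀ q ∈ P, c < q)
    (hn : n ≠ 0) (hY : Y ≤ c ^ n) : tupleReciprocalSum P n (· ≤ Y) = 0 := by
  rw [tupleReciprocalSum, filter_false_of_mem, sum_empty]
  intro q hq
  rw [Fintype.mem_piFinset] at hq
  refine not_le.2 (hY.trans_lt ?_)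
  calc c ^ n = ∏ _i : Fin n, c := by simp
    _ < ∏ i, (q i : ℝ) := prod_lt_prod_of_nonempty (fun _ _ => hc) (fun i _ => hcP _ (hq i))
        (univ_nonempty_iff.2 ⟨⟨0, Nat.pos_of_ne_zero hn⟩⟩)

theorem sum_inv_mul_tupleReciprocalSum_le {X Y : ℝ} (hPY : ∀ q ∈ P, q * Y ≤ X) :
    (∑ q ∈ P, 1 / (q : ℝ)) * tupleReciprocalSum P n (· ≤ Y) ≤
      tupleReciprocalSum P (n + 1) (· ≤ Y) +
        tupleReciprocalSum P (n + 1) (fun t => Y < t ∧ t ≤ X) :=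
  calc (∑ q ∈ P, 1 / (q : ℝ)) * tupleReciprocalSum P n (· ≤ Y)
      ≤ ∑ a ∈ P, 1 / (a : ℝ) * tupleReciprocalSum P n (fun t => a * t ≤ X) := by
        rw [sum_mul]
        refine sum_le_sum fun a ha => mul_le_mul_of_nonneg_left
          (tupleReciprocalSum_mono fun t ht => ?_) (by positivity)
        exact (mul_le_mul_of_nonneg_left ht a.cast_nonneg).trans (hPY a ha)
    _ = tupleReciprocalSum P (n + 1) (· ≤ X) := (tupleReciprocalSum_succ (p := (· ≤ X))).symm
    _ ≤ _ := tupleReciprocalSum_le_add fun t ht => (le_or_gt t Y).imp id fun h => ⟨h, ht⟩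

end TupleReciprocalSum

theorem exists_pow_div_le_of_mul_le_add {A B : ℕ → ℝ} {S : ℝ} {L : ℕ} (hS : 0 < S)
    (hL : 0 < L) (hA0 : A 0 = 1) (hAL : A L = 0) (hstep : ∀ n, S * A n ≤ A (n + 1) + B (n + 1)) :
    ∃ ℓ, 0 < ℓ ∧ ℓ ≤ L ∧ S ^ ℓ / L ≤ B ℓ := by
  have hdiff : ∀ n, A n / S ^ n - A (n + 1) / S ^ (n + 1) ≤ B (n + 1) / S ^ (n + 1) := by
    intro n
    rw [show A n / S ^ n = S * A n / S ^ (n + 1) by field_simp; ring, ← sub_div]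
    gcongr
    linarith [hstep n]
  have hsum : ∑ _n ∈ range L, 1 / (L : ℝ) ≤ ∑ n ∈ range L, B (n + 1) / S ^ (n + 1) :=
    calc ∑ _n ∈ range L, 1 / (L : ℝ) = A 0 / S ^ 0 - A L / S ^ L := by
          simp [hA0, hAL, hL.ne']
      _ = ∑ n ∈ range L, (A n / S ^ n - A (n + 1) / S ^ (n + 1)) :=
          (sum_range_sub' (fun n => A n / S ^ n) L).symm
      _ ≤ _ := sum_le_sum fun n _ => hdiff n
  obtain ⟨n, hn, hle⟩ := exists_le_of_sum_le (nonempty_range_iff.2 hL.ne') hsum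
  refine ⟨n + 1, n.succ_pos, mem_range.1 hn, ?_⟩
  rwa [le_div_iff₀ (pow_pos hS _), one_div_mul_eq_div] at hle

theorem exists_le_tupleReciprocalSum_Ioc {P : Finset ℕ} (hP : P.Nonempty) {c M X : ℝ} {L : ℕ}
    (hc : 0 < c) (hcP : ∀ q ∈ P, c < q) (hPM : ∀ q ∈ P, (q : ℝ) ≤ M) (hMX : M ≤ X)
    (hL : 0 < L) (hXc : X / M ≤ c ^ L) :
    ∃ ℓ, 0 < ℓ ∧ ℓ ≤ L ∧ (∑ q ∈ P, 1 / (q : ℝ)) ^ ℓ / L ≤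
      tupleReciprocalSum P ℓ (fun t => X / M < t ∧ t ≤ X) := by
  obtain ⟨q₀, hq₀⟩ := hP
  have hM : 0 < M := hc.trans ((hcP q₀ hq₀).trans_le (hPM q₀ hq₀))
  refine exists_pow_div_le_of_mul_le_add (A := fun n => tupleReciprocalSum P n (· ≤ X / M))
    (sum_pos (fun q hq => one_div_pos.2 (hc.trans (hcP q hq))) ⟨q₀, hq₀⟩) hL
    (tupleReciprocalSum_zero ((one_le_div hM).2 hMX))
    (tupleReciprocalSum_le_eq_zero hc hcP hL.ne' hXc)
    fun n => sum_inv_mul_tupleReciprocalSum_le fun q hq => ?_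
  calc (q : ℝ) * (X / M) ≤ M * (X / M) :=
        mul_le_mul_of_nonneg_right (hPM q hq) (div_nonneg (hM.le.trans hMX) hM.le)
    _ = X := mul_div_cancel₀ X hM.ne'

section Exponents

open Real

variable {x u w X : ℝ}

theorem div_log_le_log_of_rpow_inv_le (hx : 0 < x) (hX : x ^ (1 / u) ≤ X) :
    log x / u ≤ log X := by
  have h := log_le_log (rpow_pos_of_pos hx _) hX
  rwa [log_rpow hx, one_div_mul_eq_div] at h

theorem one_le_mul_log_div_log (hx : 1 < x) (hu : 0 < u) (huw : u ≤ w) (hX : x ^ (1 / u) ≤ X) :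
    1 ≤ w * log X / log x := by
  have hlogx := log_pos hx
  rw [le_div_iff₀ hlogx, one_mul]
  calc log x ≤ w * (log x / u) := by
        rw [mul_div_assoc', le_div_iff₀ hu, mul_comm]; gcongr
    _ ≤ w * log X := by
        gcongr
        · linarith
        · exact div_log_le_log_of_rpow_inv_le (zero_lt_one.trans hx) hX

theorem div_rpow_inv_le_rpow_inv_pow_floor (hx : 1 < x) (hu : 0 < u) (huw : u ≤ w)
    (hX : x ^ (1 / u) ≤ X) :
    X / x ^ (1 / u) ≤ (x ^ (1 / w)) ^ ⌊w * log X / log x⌋₊ := by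
  have hx0 : 0 < x := zero_lt_one.trans hx
  have hlogx := log_pos hx
  have hw : 0 < w := hu.trans_le huw
  have hX0 : 0 < X := (rpow_pos_of_pos hx0 _).trans_le hX
  have hfloor := Nat.sub_one_lt_floor (w * log X / log x)
  rw [← rpow_natCast, ← rpow_mul hx0.le, le_rpow_iff_log_le (div_pos hX0 (rpow_pos_of_pos hx0 _))
    hx0, log_div hX0.ne' (rpow_pos_of_pos hx0 _).ne', log_rpow hx0]
  calc log X - 1 / u * log x ≤ log X - 1 / w * log x := by gcongr
    _ = (w * log X / log x - 1) * log x / w := by field_simp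
    _ ≤ 1 / w * ⌊w * log X / log x⌋₊ * log x := by
        rw [one_div_mul_eq_div, div_mul_eq_mul_div]; gcongr

end Exponents

open Finset Real Classical in
theorem stmt_4_general (x u v X : ℝ) (hx : Real.exp 1 ≤ x) (hu : 1 ≤ u) (huv : u ≤ v)
    (P : Finset ℕ) (hPne : P.Nonempty)
    (hP : ∀ q ∈ P, Nat.Prime q ∧ x ^ (1 / (Real.exp 1 * v)) < (q : ℝ) ∧ (q : ℝ) ≤ x ^ (1 / u))
    (hX : x ^ (1 / u) ≤ X) :
    ∃ ℓ : ℕ, 0 < ℓ ∧ (ℓ : ℝ) ≤ Real.exp 1 * v * Real.log X / Real.log x ∧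
      ∑ q ∈ (Fintype.piFinset fun _ : Fin ℓ => P).filter
          (fun q => X * x ^ (-(1 / u)) < ∏ i, (q i : ℝ) ∧ ∏ i, (q i : ℝ) ≤ X),
        1 / ∏ i, (q i : ℝ) ≥
        (1 / (Real.exp 1 * v * Real.log X / Real.log x)) * (∑ q ∈ P, 1 / (q : ℝ)) ^ ℓ := by
  have hx1 : 1 < x := (one_lt_exp_iff.2 one_pos).trans_le hx
  have hx0 : 0 < x := zero_lt_one.trans hx1
  have hu0 : 0 < u := zero_lt_one.trans_le hu
  have huw : u ≤ exp 1 * v :=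
    huv.trans (le_mul_of_one_le_left (hu0.le.trans huv) (one_le_exp_iff.2 zero_le_one))
  have hK := one_le_mul_log_div_log hx1 hu0 huw hX
  obtain ⟨ℓ, hℓ, hℓK, hmass⟩ := exists_le_tupleReciprocalSum_Ioc hPne
    (rpow_pos_of_pos hx0 _) (fun q hq => (hP q hq).2.1) (fun q hq => (hP q hq).2.2) hX
    (Nat.floor_pos.2 hK) (div_rpow_inv_le_rpow_inv_pow_floor hx1 hu0 huw hX)
  refine ⟨ℓ, hℓ, (Nat.cast_le.2 hℓK).trans (Nat.floor_le (zero_le_one.trans hK)), ?_⟩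
  rw [rpow_neg hx0.le, ← div_eq_mul_inv, ge_iff_le, one_div_mul_eq_div]
  refine le_trans ?_ hmass
  gcongr
  · exact Nat.cast_pos.2 (Nat.floor_pos.2 hK)
  · exact Nat.floor_le (zero_le_one.trans hK)

open Finset Real Classical in
theorem stmt_4 (x u v X : ℝ) (hx : Real.exp 1 ≤ x) (hu : 1 ≤ u) (huv : u ≤ v)
    (hv : v ≤ Real.log x / Real.exp 1)
    (P : Finset ℕ) (hPne : P.Nonempty)
    (hP : ∀ q ∈ P, Nat.Prime q ∧ x ^ (1 / (Real.exp 1 * v)) < (q : ℝ) ∧ (q : ℝ) ≤ x ^ (1 / u))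
    (hX : x ^ (1 / u) ≤ X) :
    ∃ ℓ : ℕ, 0 < ℓ ∧ (ℓ : ℝ) ≤ Real.exp 1 * v * Real.log X / Real.log x ∧
      ∑ q ∈ (Fintype.piFinset fun _ : Fin ℓ => P).filter
          (fun q => X * x ^ (-(1 / u)) < ∏ i, (q i : ℝ) ∧ ∏ i, (q i : ℝ) ≤ X),
        1 / ∏ i, (q i : ℝ) ≥
        (1 / (Real.exp 1 * v * Real.log X / Real.log x)) * (∑ q ∈ P, 1 / (q : ℝ)) ^ ℓ :=
  stmt_4_general x u v X hx hu huv P hPne hP hX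
end

section
/- Let P = { x₀ + l₁x₁ + ⋯ + l_d x_d : |l_j| ≤ L_j for all j } be a generalized arithmetic progression of integers with positive integer side lengths L_j. Let k ≥ 1 be an integer, δ ∈ (0, 1/6^d), and set ρ = 1 − 3δ^{1/d}; assume ρ ≥ 1/2. Define Q_k = { k x₀ + l₁x₁ + ⋯ + l_d x_d : |l_j| ≤ ρ k L_j for all j }. Then for every n ∈ Q_k, the number of k-tuples (p₁,…,p_k) ∈ (P as a multiset of lattice-parameter points)^k with p₁+⋯+p_k = n, counted as r_{kP}(n) = #{(l^{(1)},…,l^{(k)}) : each |l^{(i)}_j| ≤ L_j, and the corresponding elements sum to n}, satisfies r_{kP}(n) ≥ (δ|P|)^{k−1}, where |P| denotes the number of lattice parameter tuples ∏_j(2L_j+1). -/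
/-!
Write `n = k x₀ + ∑ mⱼ xⱼ` with `|mⱼ| ≤ ρ k Lⱼ` and count only the `k`-tuples of box points
whose sum is `m` already in `ℤ^d`. Induct on `k`: a tuple for `m` with `k + 1` entries is a box
point `v` followed by a `k`-tuple for `m - v`, and it suffices to let `v` range over the box points
with `|mⱼ - vⱼ| ≤ ρ k Lⱼ`, so that `m - v` again satisfies the hypothesis. In each coordinate this
window meets `[-L, L]` in at least `ε (2L + 1)` integers, where `ε = δ^{1/d} = (1 - ρ)/3`:
the overlap has length at least `(1 - ρ) L` because `|m| ≤ ρ (k + 1) L`, unless it is the whole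
window, of length `2 ρ k L ≥ L`. Hence each step gains a factor `∏ⱼ ε (2Lⱼ + 1) = δ |P|`.
-/

open Finset

theorem Icc_max_min_floor_subset_filter_abs_sub_le (a b m : ℤ) (R : ℝ) :
    Icc (max a (m - ⌊R⌋)) (min b (m + ⌊R⌋)) ⊆ {l ∈ Icc a b | |(m : ℝ) - (l : ℤ)| ≤ R} := by
  intro l hl
  obtain ⟨hal, hlb⟩ := mem_Icc.1 hl
  have h₁ : ((m - ⌊R⌋ : ℤ) : ℝ) ≤ l := by exact_mod_cast (le_max_right _ _).trans hal
  have h₂ : (l : ℝ) ≤ ((m + ⌊R⌋ : ℤ) : ℝ) := by exact_mod_cast hlb.trans (min_le_right _ _)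
  have hR := Int.floor_le R
  push_cast at h₁ h₂
  refine mem_filter.2 ⟨mem_Icc.2 ⟨(le_max_left _ _).trans hal, hlb.trans (min_le_left _ _)⟩, ?_⟩
  exact abs_le.2 ⟨by linarith, by linarith⟩

theorem le_card_Icc_filter_abs_sub_le {L : ℕ} {m : ℤ} {R ε : ℝ} (hε : 0 ≤ ε)
    (hρ : 1 / 2 ≤ 1 - 3 * ε) (hR : (1 - 3 * ε) * L ≤ R)
    (hm : |(m : ℝ)| ≤ R + (1 - 3 * ε) * L) :
    ε * (2 * L + 1) ≤ #{l ∈ Icc (-(L : ℤ)) L | |(m : ℝ) - (l : ℤ)| ≤ R} := by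
  set F := ⌊R⌋
  set a := max (-(L : ℤ)) (m - F)
  set b := min (L : ℤ) (m + F)
  have hFR : (F : ℝ) ≤ R := Int.floor_le R
  have hRF : R < F + 1 := Int.lt_floor_add_one R
  have hεL₀ : 0 ≤ ε * L := by positivity
  have hεL : ε * L ≤ L / 6 := by nlinarith
  have hF : (0 : ℝ) ≤ F := by exact_mod_cast Int.floor_nonneg.2 (by linarith)
  obtain ⟨hm₁, hm₂⟩ := abs_le.1 hm
  have hmF₁ : (m : ℝ) - F ≤ L := by
    have : m - F < (L : ℤ) + 1 := by exact_mod_cast (show (m : ℝ) - F < L + 1 by linarith)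
    exact_mod_cast Int.lt_add_one_iff.1 this
  have hmF₂ : -(L : ℝ) ≤ m + F := by
    have : -(L : ℤ) - 1 < m + F := by exact_mod_cast (show -(L : ℝ) - 1 < m + F by linarith)
    exact_mod_cast Int.sub_one_lt_iff.1 this
  have hlen : ε * (2 * L + 1) ≤ (b : ℝ) + 1 - a := by
    rcases min_cases (L : ℤ) (m + F) with ⟨hb, -⟩ | ⟨hb, -⟩ <;>
      rcases max_cases (-(L : ℤ)) (m - F) with ⟨ha, -⟩ | ⟨ha, -⟩ <;>
      simp only [a, b, ha, hb] <;> push_cast <;> linarith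
  calc ε * (2 * L + 1) ≤ (b : ℝ) + 1 - a := hlen
    _ ≤ ((b + 1 - a).toNat : ℤ) := by exact_mod_cast Int.self_le_toNat _
    _ = #(Icc a b) := by rw [Int.card_Icc]; norm_cast
    _ ≤ _ := by exact_mod_cast card_le_card (Icc_max_min_floor_subset_filter_abs_sub_le _ _ m R)

section

variable {ι : Type*} [Fintype ι] [DecidableEq ι]

noncomputable def intBox (L : ι → ℕ) : Finset (ι → ℤ) :=
  Fintype.piFinset fun j => Icc (-(L j : ℤ)) (L j)

noncomputable def boxRepresentations (L : ι → ℕ) (k : ℕ) (m : ι → ℤ) : Finset (Fin k → ι → ℤ) :=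
  {l ∈ Fintype.piFinset fun _ => intBox L | ∑ i, l i = m}

theorem sum_card_boxRepresentations_sub_le {L : ι → ℕ} {S : Finset (ι → ℤ)}
    (hS : S ⊆ intBox L) (k : ℕ) (m : ι → ℤ) :
    ∑ v ∈ S, #(boxRepresentations L k (m - v)) ≤ #(boxRepresentations L (k + 1) m) := by
  rw [← card_sigma]
  refine card_le_card_of_injOn (fun p => Fin.cons p.1 p.2) ?_ ?_
  · rintro ⟨v, l⟩ hp
    simp only [coe_sigma, Set.mem_sigma_iff, mem_coe, boxRepresentations, mem_filter,
      Fintype.mem_piFinset] at hp ⊢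
    obtain ⟨hv, hl, hsum⟩ := hp
    refine ⟨Fin.cases (hS hv) hl, ?_⟩
    rw [Fin.sum_univ_succ]
    simp only [Fin.cons_zero, Fin.cons_succ, hsum, add_sub_cancel]
  · rintro ⟨v, l⟩ - ⟨w, l'⟩ - h
    obtain ⟨rfl, rfl⟩ := Fin.cons_injective2 h
    rfl

theorem pow_le_card_boxRepresentations {L : ι → ℕ} {ε : ℝ} (hε : 0 ≤ ε)
    (hρ : 1 / 2 ≤ 1 - 3 * ε) {k : ℕ} (hk : 1 ≤ k) {m : ι → ℤ}
    (hm : ∀ j, |(m j : ℝ)| ≤ (1 - 3 * ε) * k * L j) :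
    (∏ j, ε * (2 * L j + 1)) ^ (k - 1) ≤ #(boxRepresentations L k m) := by
  induction k, hk using Nat.le_induction generalizing m with
  | base =>
    have hmem : (fun _ => m) ∈ boxRepresentations L 1 m := by
      simp only [boxRepresentations, intBox, mem_filter, Fintype.mem_piFinset, mem_Icc,
        univ_unique, sum_singleton, and_true]
      intro _ j
      have : |(m j : ℝ)| ≤ L j := (hm j).trans (by push_cast; nlinarith)
      exact abs_le.1 (by exact_mod_cast this)
    simpa using card_pos.2 ⟨_, hmem⟩
  | succ k hk ih =>
    set C := ∏ j, ε * (2 * (L j : ℝ) + 1)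
    set S : Finset (ι → ℤ) := Fintype.piFinset fun j =>
      {l ∈ Icc (-(L j : ℤ)) (L j) | |(m j : ℝ) - (l : ℤ)| ≤ (1 - 3 * ε) * k * L j}
    have hS : S ⊆ intBox L := Fintype.piFinset_subset _ _ fun j => filter_subset _ _
    have hCS : C ≤ #S := by
      rw [Fintype.card_piFinset, Nat.cast_prod]
      refine prod_le_prod (fun j _ => by positivity) fun j _ => ?_
      have hk' : (1 : ℝ) ≤ k := by exact_mod_cast hk
      have hρ₀ : 0 ≤ (1 - 3 * ε) * (L j : ℝ) := by positivity
      refine le_card_Icc_filter_abs_sub_le hε hρ (by nlinarith) ?_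
      have := hm j
      push_cast at this
      linarith
    have hfiber : ∀ v ∈ S, C ^ (k - 1) ≤ #(boxRepresentations L k (m - v)) := by
      intro v hv
      refine ih fun j => ?_
      have := (mem_filter.1 (Fintype.mem_piFinset.1 hv j)).2
      simpa using this
    calc C ^ (k + 1 - 1) = C * C ^ (k - 1) := by rw [← pow_succ', Nat.sub_add_comm hk]
      _ ≤ #S * C ^ (k - 1) := by gcongr
      _ = ∑ _v ∈ S, C ^ (k - 1) := by rw [sum_const, nsmul_eq_mul]
      _ ≤ ∑ v ∈ S, (#(boxRepresentations L k (m - v)) : ℝ) := sum_le_sum hfiber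
      _ ≤ #(boxRepresentations L (k + 1) m) := by
        exact_mod_cast sum_card_boxRepresentations_sub_le hS k m

end

open Finset Classical in
theorem stmt_5_general (d : ℕ) (hd : 1 ≤ d) (x₀ : ℤ) (xv : Fin d → ℤ)
    (L : Fin d → ℕ)
    (k : ℕ) (hk : 1 ≤ k) (δ : ℝ) (hδ : 0 < δ)
    (hρ : (1 : ℝ) / 2 ≤ 1 - 3 * δ ^ ((1 : ℝ) / d))
    (n : ℤ)
    (hn : ∃ l : Fin d → ℤ, (∀ j, |(l j : ℝ)| ≤ (1 - 3 * δ ^ ((1 : ℝ) / d)) * k * L j) ∧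
      n = k * x₀ + ∑ j, l j * xv j) :
    (((Fintype.piFinset fun _ : Fin k =>
          Fintype.piFinset fun j : Fin d => Finset.Icc (-(L j : ℤ)) (L j)).filter
        (fun l => (k : ℤ) * x₀ + ∑ i, ∑ j, l i j * xv j = n)).card : ℝ) ≥
      (δ * ∏ j, (2 * (L j : ℝ) + 1)) ^ (k - 1) := by
  obtain ⟨m, hm, rfl⟩ := hn
  set ε := δ ^ ((1 : ℝ) / d)
  have hεd : ε ^ d = δ := by
    rw [← Real.rpow_natCast, ← Real.rpow_mul hδ.le, one_div_mul_cancel (by positivity),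
      Real.rpow_one]
  have hsub : boxRepresentations L k m ⊆ {l ∈ Fintype.piFinset fun _ : Fin k =>
      Fintype.piFinset fun j : Fin d => Icc (-(L j : ℤ)) (L j) |
        (k : ℤ) * x₀ + ∑ i, ∑ j, l i j * xv j = k * x₀ + ∑ j, m j * xv j} := by
    intro l hl
    obtain ⟨hbox, hsum⟩ := mem_filter.1 hl
    refine mem_filter.2 ⟨hbox, ?_⟩
    simp only [← hsum, sum_comm (γ := Fin k), Finset.sum_apply, sum_mul]
  calc (δ * ∏ j, (2 * (L j : ℝ) + 1)) ^ (k - 1) = (∏ j, ε * (2 * L j + 1)) ^ (k - 1) := by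
        rw [prod_mul_distrib, prod_const, card_univ, Fintype.card_fin, hεd]
    _ ≤ #(boxRepresentations L k m) :=
        pow_le_card_boxRepresentations (by positivity) hρ hk hm
    _ ≤ _ := by exact_mod_cast card_le_card hsub

open Finset Classical in
theorem stmt_5 (d : ℕ) (hd : 1 ≤ d) (x₀ : ℤ) (xv : Fin d → ℤ)
    (L : Fin d → ℕ) (hL : ∀ j, 0 < L j)
    (k : ℕ) (hk : 1 ≤ k) (δ : ℝ) (hδ : 0 < δ) (hδ' : δ < 1 / 6 ^ d)
    (hρ : (1 : ℝ) / 2 ≤ 1 - 3 * δ ^ ((1 : ℝ) / d))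
    (n : ℤ)
    (hn : ∃ l : Fin d → ℤ, (∀ j, |(l j : ℝ)| ≤ (1 - 3 * δ ^ ((1 : ℝ) / d)) * k * L j) ∧
      n = k * x₀ + ∑ j, l j * xv j) :
    (((Fintype.piFinset fun _ : Fin k =>
          Fintype.piFinset fun j : Fin d => Finset.Icc (-(L j : ℤ)) (L j)).filter
        (fun l => (k : ℤ) * x₀ + ∑ i, ∑ j, l i j * xv j = n)).card : ℝ) ≥
      (δ * ∏ j, (2 * (L j : ℝ) + 1)) ^ (k - 1) :=
  stmt_5_general d hd x₀ xv L k hk δ hδ hρ n hn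
end

section
/- For each positive integer N, let T_N = ⋃_{j=1}^{N} (j/(N+1), j/N). Then there do not exist a positive integer k and t₁,…,t_k ∈ T_N with t₁ + ⋯ + t_k = 1. -/
theorem stmt_6 (N : ℕ) (hN : 1 ≤ N) :
    ¬∃ (k : ℕ) (_ : 0 < k) (t : Fin k → ℝ),
      (∀ i, ∃ j : ℕ, 1 ≤ j ∧ j ≤ N ∧
        (j : ℝ) / (N + 1) < t i ∧ t i < (j : ℝ) / N) ∧
      ∑ i, t i = 1 := by
  rintro ⟨k, hk, t, h, hsum⟩
  choose j hj1 hjN hlo hhi using h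
  have hN0 : (0:ℝ) < N := by exact_mod_cast Nat.pos_of_ne_zero (by omega)
  have : Nonempty (Fin k) := Fin.pos_iff_nonempty.mp hk
  have hne : (Finset.univ : Finset (Fin k)).Nonempty := Finset.univ_nonempty
  have hlow : ((∑ i, j i : ℕ) : ℝ) / (N+1) < 1 := by
    calc ((∑ i, j i : ℕ) : ℝ) / (N+1) = ∑ i, (j i : ℝ)/(N+1) := by
          push_cast; rw [Finset.sum_div]
      _ < ∑ i, t i := Finset.sum_lt_sum_of_nonempty hne (fun i _ => hlo i)
      _ = 1 := hsum
  have hhigh : 1 < ((∑ i, j i : ℕ) : ℝ) / N := by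
    calc (1:ℝ) = ∑ i, t i := hsum.symm
      _ < ∑ i, (j i : ℝ)/N := Finset.sum_lt_sum_of_nonempty hne (fun i _ => hhi i)
      _ = _ := by push_cast; rw [Finset.sum_div]
  set J := ∑ i, j i
  have h1 : (J:ℝ) < N+1 := by rwa [div_lt_one (by positivity)] at hlow
  have h2 : (N:ℝ) < J := by rwa [lt_div_iff₀ hN0, one_mul] at hhigh
  have h1' : J < N+1 := by exact_mod_cast h1
  have h2' : N < J := by exact_mod_cast h2
  omega
end

section
/- Fix N ≥ 1 and u ≥ 1 with N ≥ u. For T_N = ⋃_{j=1}^{N} (j/(N+1), j/N), we have ∫_{T_N ∩ (0, 1/u)} dt/t ≥ ⌊N/u⌋ · log(1 + 1/N) > 1/u − 2/N. -/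
/-! For `j ≤ ⌊N/u⌋` the intervals `(j/(N+1), j/N)` are pairwise disjoint, lie in `(0, 1/u)`,
and each carries `∫ dt/t = log (1 + 1/N)`; since `1/t > 0` this gives the first inequality.
The second follows from `log (1 + 1/N) ≥ 1/(N+1)` and `⌊N/u⌋ > N/u - 1`. -/

open MeasureTheory Real Set Function

def block (x : ℝ) (j : ℕ) : Set ℝ := Ioo (j / (x + 1)) (j / x)

lemma measurableSet_block (x : ℝ) (j : ℕ) : MeasurableSet (block x j) := measurableSet_Ioo

lemma integrableOn_one_div_Ioo {a b : ℝ} (ha : 0 < a) :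
    IntegrableOn (fun t : ℝ ↦ 1 / t) (Ioo a b) :=
  (continuousOn_const.div continuousOn_id fun _ ht ↦ (ha.trans_le ht.1).ne').integrableOn_Icc
    |>.mono_set Ioo_subset_Icc_self

lemma integral_one_div_block {x : ℝ} (hx : 0 < x) {j : ℕ} (hj : 0 < j) :
    ∫ t in block x j, 1 / t = log (1 + 1 / x) := by
  have hj' : (0 : ℝ) < j := by exact_mod_cast hj
  have hlt : (j : ℝ) / (x + 1) < j / x := div_lt_div_of_pos_left hj' hx (by linarith)
  rw [block, ← integral_Ioc_eq_integral_Ioo, ← intervalIntegral.integral_of_le hlt.le,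
    integral_one_div_of_pos (by positivity) (by positivity)]
  congr 1
  field_simp

lemma disjoint_block {x : ℝ} (hx : 0 < x) {a b : ℕ} (hab : a < b) (ha : (a : ℝ) ≤ x) :
    Disjoint (block x a) (block x b) := by
  have hab' : (a : ℝ) + 1 ≤ b := by exact_mod_cast hab
  have hle : (a : ℝ) / x ≤ b / (x + 1) := by
    rw [div_le_div_iff₀ hx (by linarith)]
    nlinarith
  exact Set.disjoint_left.2 fun t hta htb ↦ lt_irrefl t ((hta.2.trans_le hle).trans htb.1)

lemma biUnion_block_subset {x : ℝ} (hx : 0 < x) (n : ℕ) :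
    ⋃ j ∈ Finset.Icc 1 n, block x j ⊆ Ioo (1 / (x + 1)) (n / x) := by
  simp only [iUnion_subset_iff, Finset.mem_Icc]
  rintro j ⟨h1j, hjn⟩ t ⟨hjt, htj⟩
  have h1j' : (1 : ℝ) ≤ j := by exact_mod_cast h1j
  have hjn' : (j : ℝ) ≤ n := by exact_mod_cast hjn
  constructor
  · calc 1 / (x + 1) ≤ j / (x + 1) := by gcongr
      _ < t := hjt
  · calc t < j / x := htj
      _ ≤ n / x := by gcongr

lemma integral_one_div_biUnion_block {x : ℝ} (hx : 0 < x) {m : ℕ} (hm : (m : ℝ) ≤ x) :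
    ∫ t in ⋃ j ∈ Finset.Icc 1 m, block x j, 1 / t = m * log (1 + 1 / x) := by
  have hdisj : Set.Pairwise (Finset.Icc 1 m : Set ℕ) (Disjoint on block x) := by
    have disjoint_of_lt {a b : ℕ} (hab : a < b) (hb : b ∈ Finset.Icc 1 m) :
        Disjoint (block x a) (block x b) :=
      disjoint_block hx hab ((Nat.cast_le.2 (hab.le.trans (Finset.mem_Icc.1 hb).2)).trans hm)
    intro a ha b hb hab
    rcases hab.lt_or_gt with h | h
    · exact disjoint_of_lt h hb
    · exact (disjoint_of_lt h ha).symm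
  rw [integral_biUnion_finset _ (fun j _ ↦ measurableSet_block x j) hdisj
    fun j hj ↦ integrableOn_one_div_Ioo (by have := (Finset.mem_Icc.1 hj).1; positivity)]
  rw [Finset.sum_congr rfl fun j hj ↦ integral_one_div_block hx (Finset.mem_Icc.1 hj).1]
  simp

lemma setOf_exists_eq_biUnion_block (N : ℕ) :
    {t : ℝ | ∃ j : ℕ, 1 ≤ j ∧ j ≤ N ∧ (j : ℝ) / (N + 1) < t ∧ t < (j : ℝ) / N} =
      ⋃ j ∈ Finset.Icc 1 N, block N j := by
  ext t
  simp only [block, mem_ofPred_eq, mem_iUnion, Finset.mem_Icc, mem_Ioo, exists_prop]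
  exact exists_congr fun j ↦ by tauto

lemma one_div_add_one_le_log_one_add_one_div {x : ℝ} (hx : 0 < x) :
    1 / (x + 1) ≤ log (1 + 1 / x) := by
  have := one_sub_inv_le_log_of_pos (show 0 < 1 + 1 / x by positivity)
  convert this using 1
  field_simp
  ring

lemma sub_lt_floor_div_mul_log {x u : ℝ} (hx : 0 < x) (hu : 1 ≤ u) :
    1 / u - 2 / x < ⌊x / u⌋₊ * log (1 + 1 / x) := by
  have hu0 : 0 < u := by linarith
  have hfloor : x / u - 1 < ⌊x / u⌋₊ := Nat.sub_one_lt_floor _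
  calc 1 / u - 2 / x < (x / u - 1) * (1 / (x + 1)) := by
        rw [div_sub_div _ _ hu0.ne' hx.ne', div_sub_one hu0.ne', div_mul_div_comm, mul_one,
          div_lt_div_iff₀ (by positivity) (by positivity)]
        -- cleared of denominators, this is `0 < x (u - 1) + 2u`
        nlinarith [mul_nonneg hx.le (sub_nonneg.2 hu)]
    _ ≤ ⌊x / u⌋₊ * (1 / (x + 1)) := by gcongr
    _ ≤ ⌊x / u⌋₊ * log (1 + 1 / x) := by
        gcongr
        exact one_div_add_one_le_log_one_add_one_div hx

theorem stmt_7_general (N : ℕ) (hN : 1 ≤ N) (u : ℝ) (hu : 1 ≤ u) :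
    (∫ t in {t : ℝ | ∃ j : ℕ, 1 ≤ j ∧ j ≤ N ∧
        (j : ℝ) / (N + 1) < t ∧ t < (j : ℝ) / N} ∩ Set.Ioo 0 (1 / u), 1 / t) ≥
      (⌊(N : ℝ) / u⌋₊ : ℝ) * Real.log (1 + 1 / N) ∧
    (⌊(N : ℝ) / u⌋₊ : ℝ) * Real.log (1 + 1 / N) > 1 / u - 2 / N := by
  have hN0 : (0 : ℝ) < N := by exact_mod_cast hN
  have hu0 : 0 < u := by linarith
  refine ⟨?_, sub_lt_floor_div_mul_log hN0 hu⟩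
  set m := ⌊(N : ℝ) / u⌋₊
  have hmu : (m : ℝ) ≤ N / u := Nat.floor_le (by positivity)
  have hmN : (m : ℝ) ≤ N := hmu.trans (div_le_self hN0.le hu)
  have hsub : ⋃ j ∈ Finset.Icc 1 m, block N j ⊆
      (⋃ j ∈ Finset.Icc 1 N, block N j) ∩ Ioo 0 (1 / u) := by
    refine subset_inter (biUnion_subset_biUnion_left ?_) ?_
    · exact Finset.coe_subset.2 (Finset.Icc_subset_Icc_right (by exact_mod_cast hmN))
    · refine (biUnion_block_subset hN0 m).trans (Ioo_subset_Ioo (by positivity) ?_)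
      rwa [div_le_div_iff₀ hN0 hu0, one_mul, ← le_div_iff₀ hu0]
  rw [setOf_exists_eq_biUnion_block, ge_iff_le, ← integral_one_div_biUnion_block hN0 hmN]
  refine setIntegral_mono_set ?_ ?_ hsub.eventuallyLE
  · exact (integrableOn_one_div_Ioo (by positivity)).mono_set
      (inter_subset_left.trans (biUnion_block_subset hN0 N))
  · have hmeas : MeasurableSet ((⋃ j ∈ Finset.Icc 1 N, block N j) ∩ Ioo 0 (1 / u)) :=
      (Finset.measurableSet_biUnion _ fun j _ ↦ measurableSet_block N j).inter measurableSet_Ioo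
    exact (ae_restrict_mem hmeas).mono fun t ht ↦ (one_div_pos.2 ht.2.1).le

theorem stmt_7 (N : ℕ) (hN : 1 ≤ N) (u : ℝ) (hu : 1 ≤ u) (hNu : u ≤ N) :
    (∫ t in {t : ℝ | ∃ j : ℕ, 1 ≤ j ∧ j ≤ N ∧
        (j : ℝ) / (N + 1) < t ∧ t < (j : ℝ) / N} ∩ Set.Ioo 0 (1 / u), 1 / t) ≥
      (⌊(N : ℝ) / u⌋₊ : ℝ) * Real.log (1 + 1 / N) ∧
    (⌊(N : ℝ) / u⌋₊ : ℝ) * Real.log (1 + 1 / N) > 1 / u - 2 / N :=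
  stmt_7_general N hN u hu
end

section
/- Let G be an abelian group, A a finite subset of G, δ ∈ (0, 1/2), and E ⊆ A × A with |E| ≥ (1 − δ²)|A|² and |{a + b : (a,b) ∈ E}| ≤ K|A|. Then there exists A′ ⊆ A with |A′| ≥ (1 − 2δ)|A| and |A′ − A′| ≤ (K²/(1 − 2δ))|A|. -/
open Finset Pointwise

/-!
Call `a ∈ A` popular if `(a, b) ∈ E` for at least `(1 - δ)|A|` elements `b ∈ A`. Double counting
`E` shows that at least `(1 - δ)|A|` elements of `A` are popular, and any two popular `a, a'` have
at least `(1 - 2δ)|A|` common neighbours `b`. Each common neighbour gives a pair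
`(a + b, a' + b)` of restricted sums with difference `a - a'`, and distinct `b` give distinct
pairs. So for the set `A'` of popular elements every `d ∈ A' - A'` is a difference of restricted
sums in at least `(1 - 2δ)|A|` ways, whence `(1 - 2δ)|A| · |A' - A'| ≤ |A +_E A|² ≤ K²|A|²`.
-/

section Counting

variable {α β : Type*}

theorem card_eq_sum_card_filter_of_subset_product [DecidableEq α] [DecidableEq β]
    {s : Finset α} {t : Finset β} {E : Finset (α × β)} (hE : E ⊆ s ×ˢ t) :
    #E = ∑ a ∈ s, #{b ∈ t | (a, b) ∈ E} := by
  calc #E = #{p ∈ s ×ˢ t | p ∈ E} := by rw [filter_mem_eq_inter, inter_eq_right.mpr hE]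
    _ = ∑ a ∈ s, #{b ∈ t | (a, b) ∈ E} := by simp only [card_filter, sum_product]

theorem sum_le_card_filter_mul_add {s : Finset α} {f : α → ℝ} {M : ℝ} (c : ℝ)
    (hM : ∀ a ∈ s, f a ≤ M) :
    ∑ a ∈ s, f a ≤ #{a ∈ s | c ≤ f a} * M + (#s - #{a ∈ s | c ≤ f a}) * c := by
  classical
  have hcard : (#{a ∈ s | ¬c ≤ f a} : ℝ) = #s - #{a ∈ s | c ≤ f a} := by
    rw [← card_filter_add_card_filter_not (s := s) (fun a => c ≤ f a)]
    push_cast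
    ring
  have hpop : ∑ a ∈ s with c ≤ f a, f a ≤ #{a ∈ s | c ≤ f a} * M := by
    simpa using sum_le_card_nsmul _ f M fun a ha => hM a (mem_filter.mp ha).1
  have hunpop : ∑ a ∈ s with ¬c ≤ f a, f a ≤ #{a ∈ s | ¬c ≤ f a} * c := by
    simpa using sum_le_card_nsmul _ f c fun a ha => (not_le.mp (mem_filter.mp ha).2).le
  rw [← sum_filter_add_sum_filter_not s (fun a => c ≤ f a), ← hcard]
  exact add_le_add hpop hunpop

theorem card_add_card_sub_card_le_card_inter [DecidableEq β] {s t u : Finset β} (hs : s ⊆ u)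
    (ht : t ⊆ u) :
    (#s + #t - #u : ℝ) ≤ #(s ∩ t) := by
  have hunion : (#(s ∪ t) : ℝ) ≤ #u := by exact_mod_cast card_le_card (union_subset hs ht)
  have hinclusion_exclusion : (#(s ∪ t) : ℝ) + #(s ∩ t) = #s + #t := by
    exact_mod_cast card_union_add_card_inter s t
  linarith

end Counting

theorem one_sub_mul_card_le_card_filter_of_le_card {α : Type*} [DecidableEq α] {A : Finset α}
    {E : Finset (α × α)} (hE : E ⊆ A ×ˢ A) {δ : ℝ} (hδ : 0 < δ)
    (hEcard : (1 - δ ^ 2) * (#A : ℝ) ^ 2 ≤ #E) :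
    (1 - δ) * #A ≤ #{a ∈ A | (1 - δ) * #A ≤ #{b ∈ A | (a, b) ∈ E}} := by
  set n : ℝ := (#A : ℝ)
  set k : ℝ := (#{a ∈ A | (1 - δ) * n ≤ #{b ∈ A | (a, b) ∈ E}} : ℝ)
  have hdeg : ∀ a ∈ A, (#{b ∈ A | (a, b) ∈ E} : ℝ) ≤ n := fun a _ =>
    Nat.cast_le.mpr (card_filter_le _ _)
  have hsum : (1 - δ ^ 2) * n ^ 2 ≤ k * n + (n - k) * ((1 - δ) * n) := by
    refine hEcard.trans ?_
    rw [card_eq_sum_card_filter_of_subset_product hE, Nat.cast_sum]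
    exact sum_le_card_filter_mul_add _ hdeg
  -- `hsum` rearranges to `δ * n * (k - (1 - δ) * n) ≥ 0`
  rcases (show (0 : ℝ) ≤ n by positivity).eq_or_lt with hn | hn
  · rw [← hn, mul_zero]; positivity
  · nlinarith [mul_pos hδ hn]

theorem mul_card_sub_le_sq_card_image_add {G : Type*} [AddCommGroup G] [DecidableEq G]
    {A B : Finset G} {E : Finset (G × G)} {m : ℝ}
    (h : ∀ a ∈ A, ∀ a' ∈ A, m ≤ #({b ∈ B | (a, b) ∈ E} ∩ {b ∈ B | (a', b) ∈ E})) :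
    m * #(A - A) ≤ #(E.image fun ab => ab.1 + ab.2) ^ 2 := by
  set S := E.image fun ab => ab.1 + ab.2
  have hfiber : ∀ d ∈ A - A, m ≤ #{p ∈ S ×ˢ S | p.1 - p.2 = d} := by
    intro d hd
    obtain ⟨a, ha, a', ha', rfl⟩ := mem_sub.mp hd
    refine (h a ha a' ha').trans (Nat.cast_le.mpr
      (card_le_card_of_injOn (fun b => (a + b, a' + b)) ?_ ?_))
    · intro b hb
      simp only [coe_inter, coe_filter, Set.mem_inter_iff, Set.mem_ofPred_eq] at hb
      simp only [coe_filter, mem_product, Set.mem_ofPred_eq, add_sub_add_right_eq_sub, and_true]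
      exact ⟨mem_image_of_mem _ hb.1.2, mem_image_of_mem _ hb.2.2⟩
    · intro b _ b' _ hbb'
      exact add_left_cancel (congrArg Prod.fst hbb')
  calc m * #(A - A) = ∑ _d ∈ A - A, m := by rw [sum_const, nsmul_eq_mul, mul_comm]
    _ ≤ ∑ d ∈ A - A, (#{p ∈ S ×ˢ S | p.1 - p.2 = d} : ℝ) := sum_le_sum hfiber
    _ = #{p ∈ S ×ˢ S | p.1 - p.2 ∈ A - A} := by
      exact_mod_cast sum_card_fiberwise_eq_card_filter _ _ _
    _ ≤ #(S ×ˢ S) := Nat.cast_le.mpr (card_filter_le _ _)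
    _ = #S ^ 2 := by rw [card_product, Nat.cast_mul, sq]

theorem stmt_9_general {G : Type*} [AddCommGroup G] [DecidableEq G]
    (A : Finset G) (δ K : ℝ) (hδ : 0 < δ) (hδ' : δ < 1 / 2)
    (E : Finset (G × G)) (hE : E ⊆ A ×ˢ A)
    (hEcard : (1 - δ ^ 2) * (A.card : ℝ) ^ 2 ≤ (E.card : ℝ))
    (hsum : ((E.image fun ab => ab.1 + ab.2).card : ℝ) ≤ K * A.card) :
    ∃ A' ⊆ A, (1 - 2 * δ) * (A.card : ℝ) ≤ (A'.card : ℝ) ∧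
      ((A' - A').card : ℝ) ≤ K ^ 2 / (1 - 2 * δ) * A.card := by
  set A' := {a ∈ A | (1 - δ) * #A ≤ #{b ∈ A | (a, b) ∈ E}}
  have hA' : (1 - δ) * #A ≤ (#A' : ℝ) := one_sub_mul_card_le_card_filter_of_le_card hE hδ hEcard
  have hcommon : ∀ a ∈ A', ∀ a' ∈ A',
      (1 - 2 * δ) * #A ≤ (#({b ∈ A | (a, b) ∈ E} ∩ {b ∈ A | (a', b) ∈ E}) : ℝ) := by
    intro a ha a' ha'
    have := card_add_card_sub_card_le_card_inter (filter_subset (fun b => (a, b) ∈ E) A)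
      (filter_subset (fun b => (a', b) ∈ E) A)
    linarith [(mem_filter.mp ha).2, (mem_filter.mp ha').2]
  have hdiff := mul_card_sub_le_sq_card_image_add hcommon
  have hsum_sq := pow_le_pow_left₀ (by positivity) hsum 2
  have hδn : 0 ≤ δ * #A := by positivity
  refine ⟨A', filter_subset _ _, by linarith, ?_⟩
  rcases A.eq_empty_or_nonempty with rfl | hA
  · simp [A']
  rw [div_mul_eq_mul_div, le_div_iff₀ (by linarith)]
  have hn : (0 : ℝ) < #A := by exact_mod_cast hA.card_pos
  nlinarith

theorem stmt_9 {G : Type*} [AddCommGroup G] [DecidableEq G]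
    (A : Finset G) (δ K : ℝ) (hδ : 0 < δ) (hδ' : δ < 1 / 2) (hK : 1 ≤ K)
    (E : Finset (G × G)) (hE : E ⊆ A ×ˢ A)
    (hEcard : (1 - δ ^ 2) * (A.card : ℝ) ^ 2 ≤ (E.card : ℝ))
    (hsum : ((E.image fun ab => ab.1 + ab.2).card : ℝ) ≤ K * A.card) :
    ∃ A' ⊆ A, (1 - 2 * δ) * (A.card : ℝ) ≤ (A'.card : ℝ) ∧
      ((A' - A').card : ℝ) ≤ K ^ 2 / (1 - 2 * δ) * A.card :=
  stmt_9_general A δ K hδ hδ' E hE hEcard hsum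
end

section
/- Suppose Hypothesis T holds: there exist λ₃ > 0 and constants τ_v > 0 such that for all 1 ≤ u ≤ v and open T ⊆ (1/(ev), 1/u) with ∫_T dt/t ≥ (1+λ₃)/u, there exists an integer k ∈ [u, ev] with the restricted simplex integral ∫_{t₁+⋯+t_k=1, t_i ∈ T} dt₁⋯dt_{k−1}/(t₁⋯t_k) ≥ τ_v (∫_T dt/t)^k. Then Hypothesis A holds with λ₂ = 2λ₃ and α_v ≫ τ_v e^{−O(v)}: for some constant C₂, if v² ≤ λ₂N/C₂, 1 ≤ u ≤ v, and A ⊆ ℤ ∩ (N/(ev), N/u] with ∑_{a∈A} 1/a ≥ (1+λ₂)/u, then there exist an integer k ∈ [u, ev] and n ∈ [N−k, N] ∩ ℤ with ∑_{(a₁,…,a_k)∈A^k, a₁+⋯+a_k=n} 1/(a₁⋯a_k) ≥ (α_v/N)(∑_{a∈A} 1/a)^k. -/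
open MeasureTheory Real Finset

/-!
Let `A'` consist of the `a ∈ A` with `a + 1 ≤ N / u`, and `T = ⋃_{a ∈ A'} (a / N, (a + 1) / N)`.
Then `T ⊆ (1 / (e v), 1 / u)` and `∫_T dt / t ≥ ∑_{A'} 1 / (a + 1) ≥ ∑_A 1 / a - λ₃ / u`: at
most one element of `A` is discarded, and every `1 / a` is at most `e v / N`, which is small
once `N ≫ v²`. Hypothesis T then yields `k` and a lower bound for the simplex integral over `T`.

Cover the region of integration by the boxes on which `t_i ∈ (b_i / N, (b_i + 1) / N)` for all
`i ≤ k` (the last coordinate being `1 - ∑ t_i`), `b ∈ A'^k`. On such a box the integrand is at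
most `N^k / ∏ b_i` and the box has `(k - 1)`-dimensional volume at most `N^(1 - k)`; it meets
the simplex only if `N - k < ∑ b_i < N`. Hence the integral is at most `N ∑ 1 / ∏ b_i` over
those `b`, and by pigeonhole one of the `k` possible values `n` of `∑ b_i` carries a `1 / k`
share. Finally `∫_T dt / t ≥ ½ ∑_A 1 / a` and `k 2^k ≤ e^(6v)` produce the factor `e^(-6v)`.
-/

def gridCell (N : ℝ) (a : ℤ) : Set ℝ := Set.Ioo (a / N) ((a + 1) / N)

def gridCells (N : ℝ) (A : Finset ℤ) : Set ℝ := ⋃ a ∈ A, gridCell N a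

section GridCells

variable {N : ℝ} {A : Finset ℤ}

lemma isOpen_gridCells (N : ℝ) (A : Finset ℤ) : IsOpen (gridCells N A) :=
  isOpen_biUnion fun _ _ => isOpen_Ioo

lemma mem_gridCells {x : ℝ} : x ∈ gridCells N A ↔ ∃ a ∈ A, x ∈ gridCell N a := by
  simp [gridCells]

lemma pos_of_mem_gridCells (hN : 0 < N) (hA : ∀ a ∈ A, 0 < a) {x : ℝ}
    (hx : x ∈ gridCells N A) : 0 < x := by
  obtain ⟨a, ha, hxa⟩ := mem_gridCells.1 hx
  have : (0 : ℝ) < a := by exact_mod_cast hA a ha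
  exact (div_pos this hN).trans hxa.1

lemma gridCells_filter_subset_Ioo {u L : ℝ} (hN : 0 < N) (hu : 0 < u) (hL : 0 < L)
    (hA : ∀ a ∈ A, N / L < a) :
    gridCells N (A.filter fun a : ℤ => (a : ℝ) + 1 ≤ N / u) ⊆ Set.Ioo (1 / L) (1 / u) := by
  intro x hx
  obtain ⟨a, ha, hxa⟩ := mem_gridCells.1 hx
  obtain ⟨haA, hau⟩ := mem_filter.1 ha
  have hlow : 1 / L ≤ a / N := by
    rw [div_le_div_iff₀ hL hN, one_mul]
    linarith [(div_lt_iff₀ hL).1 (hA a haA)]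
  have hhigh : (a + 1) / N ≤ 1 / u := by
    rw [div_le_div_iff₀ hN hu, one_mul]
    exact (le_div_iff₀ hu).1 hau
  exact ⟨hlow.trans_lt hxa.1, hxa.2.trans_le hhigh⟩

lemma disjoint_gridCell_of_lt (hN : 0 < N) {a b : ℤ} (hab : a < b) :
    Disjoint (gridCell N a) (gridCell N b) := by
  have : (a + 1 : ℝ) / N ≤ b / N := by gcongr; exact_mod_cast hab
  exact Set.disjoint_left.2 fun x hxa hxb => by linarith [hxa.2, hxb.1]

lemma pairwiseDisjoint_gridCell (hN : 0 < N) (s : Set ℤ) : s.PairwiseDisjoint (gridCell N) :=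
  fun _ _ _ _ hab => hab.lt_or_gt.elim (disjoint_gridCell_of_lt hN)
    fun h => (disjoint_gridCell_of_lt hN h).symm

lemma integrableOn_one_div_gridCell (hN : 0 < N) {a : ℤ} (ha : 0 < a) :
    IntegrableOn (fun t => 1 / t) (gridCell N a) := by
  have hpos : (0 : ℝ) < a / N := div_pos (by exact_mod_cast ha) hN
  refine (ContinuousOn.integrableOn_Icc ?_).mono_set Set.Ioo_subset_Icc_self
  exact continuousOn_const.div continuousOn_id fun x hx => (hpos.trans_le hx.1).ne'

lemma integral_one_div_gridCell (hN : 0 < N) {a : ℤ} (ha : 0 < a) :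
    ∫ t in gridCell N a, 1 / t = log ((a + 1) / a) := by
  have hpos : (0 : ℝ) < a / N := div_pos (by exact_mod_cast ha) hN
  have hle : (a : ℝ) / N ≤ (a + 1) / N := by gcongr; linarith
  rw [gridCell, ← integral_Ioc_eq_integral_Ioo, ← intervalIntegral.integral_of_le hle,
    integral_one_div (Set.notMem_uIcc_of_lt hpos (hpos.trans_le hle)),
    div_div_div_cancel_right₀ hN.ne']

lemma one_div_add_one_le_integral_one_div_gridCell (hN : 0 < N) {a : ℤ} (ha : 0 < a) :
    1 / ((a : ℝ) + 1) ≤ ∫ t in gridCell N a, 1 / t := by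
  have ha' : (0 : ℝ) < a := by exact_mod_cast ha
  rw [integral_one_div_gridCell hN ha]
  convert one_sub_inv_le_log_of_pos (by positivity : (0 : ℝ) < (a + 1) / a) using 1
  field_simp
  ring

lemma sum_one_div_add_one_le_integral_one_div_gridCells (hN : 0 < N) (hA : ∀ a ∈ A, 0 < a) :
    ∑ a ∈ A, 1 / ((a : ℝ) + 1) ≤ ∫ t in gridCells N A, 1 / t := by
  rw [gridCells, integral_biUnion_finset (s := gridCell N) A (fun _ _ => measurableSet_Ioo)
    (pairwiseDisjoint_gridCell hN _) fun a ha => integrableOn_one_div_gridCell hN (hA a ha)]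
  exact sum_le_sum fun a ha => one_div_add_one_le_integral_one_div_gridCell hN (hA a ha)

end GridCells

section Truncation

variable {A : Finset ℤ} {X : ℝ}

lemma card_le_of_forall_mem_Ioc (hX : 0 ≤ X) (hA : ∀ a ∈ A, 0 < a ∧ (a : ℝ) ≤ X) :
    (#A : ℝ) ≤ X := by
  have hsub : A ⊆ Icc 1 ⌊X⌋ := fun a ha =>
    mem_Icc.2 ⟨(hA a ha).1, Int.le_floor.2 (hA a ha).2⟩
  have hcard : ((#(Icc 1 ⌊X⌋) : ℤ) : ℝ) ≤ X := by
    rw [Int.card_Icc, add_sub_cancel_right, Int.toNat_of_nonneg (Int.floor_nonneg.2 hX)]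
    exact Int.floor_le X
  exact (Nat.cast_le.2 (card_le_card hsub)).trans (by exact_mod_cast hcard)

lemma card_filter_not_add_one_le_le_one (hA : ∀ a ∈ A, (a : ℝ) ≤ X) :
    #(A.filter fun a : ℤ => ¬(a : ℝ) + 1 ≤ X) ≤ 1 := by
  refine card_le_one.2 fun a ha b hb => ?_
  simp only [mem_filter, not_le] at ha hb
  have hab : a < b + 1 := by exact_mod_cast (hA a ha.1).trans_lt hb.2
  have hba : b < a + 1 := by exact_mod_cast (hA b hb.1).trans_lt ha.2
  omega

lemma sum_one_div_sub_le_sum_filter_one_div_add_one {δ : ℝ} (hδ : 0 ≤ δ)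
    (hA : ∀ a ∈ A, 0 < a ∧ (a : ℝ) ≤ X) (hAδ : ∀ a ∈ A, 1 / (a : ℝ) ≤ δ) :
    ∑ a ∈ A, 1 / (a : ℝ) - δ * (1 + ∑ a ∈ A, 1 / (a : ℝ)) ≤
      ∑ a ∈ A.filter fun a : ℤ => (a : ℝ) + 1 ≤ X, 1 / ((a : ℝ) + 1) := by
  set A' := A.filter fun a : ℤ => (a : ℝ) + 1 ≤ X
  have hpos : ∀ a ∈ A, (0 : ℝ) < a := fun a ha => by exact_mod_cast (hA a ha).1
  have hdropped :
      ∑ a ∈ A.filter fun a : ℤ => ¬(a : ℝ) + 1 ≤ X, 1 / (a : ℝ) ≤ δ := by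
    refine (sum_le_card_nsmul _ _ δ fun a ha => hAδ a (mem_filter.1 ha).1).trans ?_
    rw [nsmul_eq_mul]
    exact mul_le_of_le_one_left hδ
      (by exact_mod_cast card_filter_not_add_one_le_le_one fun a ha => (hA a ha).2)
  have hsplit :=
    sum_filter_add_sum_filter_not A (fun a : ℤ => (a : ℝ) + 1 ≤ X) fun a => 1 / (a : ℝ)
  have hA'le : ∑ a ∈ A', 1 / (a : ℝ) ≤ ∑ a ∈ A, 1 / (a : ℝ) :=
    sum_le_sum_of_subset_of_nonneg (filter_subset _ _) fun a ha _ => (one_div_pos.2 (hpos a ha)).le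
  have hterm : ∀ a ∈ A', 1 / (a : ℝ) - δ * (1 / a) ≤ 1 / ((a : ℝ) + 1) := by
    intro a ha
    have ha0 := hpos a (mem_filter.1 ha).1
    have haδ := hAδ a (mem_filter.1 ha).1
    rw [div_le_iff₀ ha0] at haδ
    rw [← one_sub_mul, mul_one_div, div_le_div_iff₀ ha0 (by linarith)]
    nlinarith
  have hA' := sum_le_sum hterm
  rw [sum_sub_distrib, ← mul_sum] at hA'
  have := mul_le_mul_of_nonneg_left hA'le hδ
  linarith

lemma sum_one_div_sub_le_sum_filter_one_div_add_one_of_mem_Ioc {N u L lam : ℝ} (hN : 0 < N)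
    (hu : 0 < u) (huL : u ≤ L) (hLN : 2 * L ^ 2 ≤ lam * N)
    (hA : ∀ a ∈ A, N / L < a ∧ (a : ℝ) ≤ N / u) :
    ∑ a ∈ A, 1 / (a : ℝ) - lam / u ≤
      ∑ a ∈ A.filter fun a : ℤ => (a : ℝ) + 1 ≤ N / u, 1 / ((a : ℝ) + 1) := by
  set S := ∑ a ∈ A, 1 / (a : ℝ)
  set δ := L / N with hδ
  have hL : 0 < L := hu.trans_le huL
  have hApos : ∀ a ∈ A, (0 : ℝ) < a := fun a ha => (div_pos hN hL).trans (hA a ha).1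
  have hAδ : ∀ a ∈ A, 1 / (a : ℝ) ≤ δ := fun a ha => by
    simpa only [one_div_div] using one_div_le_one_div_of_le (by positivity) (hA a ha).1.le
  have hSδ : S ≤ L / u :=
    calc S ≤ #A * δ := by simpa only [nsmul_eq_mul] using sum_le_card_nsmul A _ δ hAδ
      _ ≤ N / u * δ := by
          gcongr
          exact card_le_of_forall_mem_Ioc (by positivity)
            fun a ha => ⟨by exact_mod_cast hApos a ha, (hA a ha).2⟩
      _ = L / u := by rw [hδ]; field_simp
  have hcost : δ * (1 + S) ≤ lam / u :=
    calc δ * (1 + S) ≤ δ * (2 * (L / u)) := by gcongr; linarith [(one_le_div hu).2 huL]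
      _ = 2 * L ^ 2 / N / u := by rw [hδ]; field_simp
      _ ≤ lam * N / N / u := by gcongr
      _ = lam / u := by field_simp
  have := sum_one_div_sub_le_sum_filter_one_div_add_one (by positivity)
    (fun a ha => ⟨by exact_mod_cast hApos a ha, (hA a ha).2⟩) hAδ
  linarith

end Truncation

section Simplex

variable {m : ℕ} {N : ℝ}

/-- The simplex `t₁ + ⋯ + t_{m+1} = 1` is parametrised by its first `m` coordinates, as in the
integrals of Hypothesis T. -/
def simplexLift (t : Fin m → ℝ) : Fin (m + 1) → ℝ := Fin.snoc t (1 - ∑ i, t i)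

lemma continuous_simplexLift : Continuous (simplexLift (m := m)) := by
  unfold simplexLift
  fun_prop

lemma sum_simplexLift (t : Fin m → ℝ) : ∑ i, simplexLift t i = 1 := by
  simp [simplexLift, Fin.sum_univ_castSucc]

lemma simplexLift_castSucc (t : Fin m → ℝ) (i : Fin m) : simplexLift t i.castSucc = t i := by
  simp [simplexLift]

lemma forall_simplexLift_mem {T : Set ℝ} {t : Fin m → ℝ} :
    (∀ i, simplexLift t i ∈ T) ↔ (∀ i, t i ∈ T) ∧ 1 - ∑ i, t i ∈ T := by
  simp [simplexLift, Fin.forall_fin_succ']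

lemma prod_inv_simplexLift (t : Fin m → ℝ) :
    ∏ i, (simplexLift t i)⁻¹ = (∏ i, (t i)⁻¹) * (1 - ∑ i, t i)⁻¹ := by
  rw [Fin.prod_univ_castSucc]
  simp [simplexLift]

lemma isOpen_setOf_forall_simplexLift_mem {T : Fin (m + 1) → Set ℝ} (hT : ∀ i, IsOpen (T i)) :
    IsOpen {t : Fin m → ℝ | ∀ i, simplexLift t i ∈ T i} := by
  simp only [Set.ofPred_forall]
  exact isOpen_iInter_of_finite fun i =>
    (hT i).preimage ((continuous_apply i).comp continuous_simplexLift)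

def simplexBox (N : ℝ) (b : Fin (m + 1) → ℤ) : Set (Fin m → ℝ) :=
  {t | ∀ i, simplexLift t i ∈ gridCell N (b i)}

lemma measurableSet_simplexBox (N : ℝ) (b : Fin (m + 1) → ℤ) :
    MeasurableSet (simplexBox N b) :=
  (isOpen_setOf_forall_simplexLift_mem fun _ => isOpen_Ioo).measurableSet

lemma volume_simplexBox_le (hN : 0 < N) (b : Fin (m + 1) → ℤ) :
    volume (simplexBox N b) ≤ ENNReal.ofReal (N⁻¹ ^ m) := by
  have hsub : simplexBox N b ⊆ Set.univ.pi fun i : Fin m => gridCell N (b i.castSucc) :=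
    fun t ht i _ => simplexLift_castSucc t i ▸ ht i.castSucc
  refine (measure_mono hsub).trans_eq ?_
  have hcell : ∀ c : ℤ, ((c : ℝ) + 1) / N - c / N = N⁻¹ := fun c => by ring
  simp only [gridCell, Real.volume_pi_Ioo, hcell, prod_const, card_univ, Fintype.card_fin,
    ENNReal.ofReal_pow (inv_nonneg.2 hN.le)]

lemma sum_mem_Ioo_of_mem_simplexBox (hN : 0 < N) {b : Fin (m + 1) → ℤ} {t : Fin m → ℝ}
    (ht : t ∈ simplexBox N b) :
    N - ((m + 1 : ℕ) : ℝ) < ((∑ i, b i : ℤ) : ℝ) ∧ ((∑ i, b i : ℤ) : ℝ) < N := by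
  have hlow : ∑ i, (b i : ℝ) / N < 1 := (sum_lt_sum_of_nonempty univ_nonempty
    fun i _ => (ht i).1).trans_eq (sum_simplexLift t)
  have hhigh : 1 < ∑ i, ((b i : ℝ) + 1) / N := (sum_simplexLift t).symm.trans_lt
    (sum_lt_sum_of_nonempty univ_nonempty fun i _ => (ht i).2)
  rw [← sum_div, div_lt_one hN] at hlow
  rw [← sum_div, one_lt_div hN, sum_add_distrib, sum_const, card_univ, Fintype.card_fin,
    nsmul_one] at hhigh
  push_cast at hhigh ⊢
  constructor <;> linarith

noncomputable def boxWeight (N : ℝ) (b : Fin (m + 1) → ℤ) : ℝ :=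
  N ^ (m + 1) * ∏ i, ((b i : ℝ))⁻¹

lemma boxWeight_nonneg (hN : 0 < N) {b : Fin (m + 1) → ℤ} (hb : ∀ i, 0 < b i) :
    0 ≤ boxWeight N b :=
  mul_nonneg (by positivity) (prod_nonneg fun i _ => (inv_pos.2 (Int.cast_pos.2 (hb i))).le)

lemma prod_inv_simplexLift_le_boxWeight (hN : 0 < N) {b : Fin (m + 1) → ℤ} (hb : ∀ i, 0 < b i)
    {t : Fin m → ℝ} (ht : t ∈ simplexBox N b) :
    ∏ i, (simplexLift t i)⁻¹ ≤ boxWeight N b := by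
  have hb' : ∀ i, (0 : ℝ) < b i / N := fun i => div_pos (Int.cast_pos.2 (hb i)) hN
  calc ∏ i, (simplexLift t i)⁻¹ ≤ ∏ i, ((b i : ℝ) / N)⁻¹ :=
        prod_le_prod (fun i _ => (inv_pos.2 ((hb' i).trans (ht i).1)).le)
          fun i _ => inv_anti₀ (hb' i) (ht i).1.le
    _ = boxWeight N b := by
        simp [boxWeight, div_eq_mul_inv, prod_mul_distrib]

lemma exists_mem_simplexBox {A : Finset ℤ} {t : Fin m → ℝ}
    (ht : ∀ i, simplexLift t i ∈ gridCells N A) :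
    ∃ b ∈ Fintype.piFinset fun _ => A, t ∈ simplexBox N b := by
  choose b hbA hb using fun i => mem_gridCells.1 (ht i)
  exact ⟨b, Fintype.mem_piFinset.2 hbA, hb⟩

noncomputable def boxMajorant (N : ℝ) (P : Finset (Fin (m + 1) → ℤ)) (t : Fin m → ℝ) :
    ℝ :=
  ∑ b ∈ P, (simplexBox N b).indicator (fun _ => boxWeight N b) t

section BoxMajorant

variable {P : Finset (Fin (m + 1) → ℤ)}

lemma boxMajorant_nonneg (hN : 0 < N) (hP : ∀ b ∈ P, ∀ i, 0 < b i) (t : Fin m → ℝ) :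
    0 ≤ boxMajorant N P t :=
  sum_nonneg fun b hb => Set.indicator_nonneg (fun _ _ => boxWeight_nonneg hN (hP b hb)) t

lemma integrable_indicator_simplexBox (hN : 0 < N) (b : Fin (m + 1) → ℤ) (c : ℝ) :
    Integrable ((simplexBox N b).indicator fun _ => c) :=
  (integrableOn_const ((volume_simplexBox_le hN b).trans_lt ENNReal.ofReal_lt_top).ne
    ).integrable_indicator (measurableSet_simplexBox N b)

lemma integrable_boxMajorant (hN : 0 < N) (P : Finset (Fin (m + 1) → ℤ)) :
    Integrable (boxMajorant N P) :=
  integrable_finsetSum _ fun b _ => integrable_indicator_simplexBox hN b _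

lemma integral_boxMajorant_le (hN : 0 < N) (hP : ∀ b ∈ P, ∀ i, 0 < b i) :
    ∫ t, boxMajorant N P t ≤ N * ∑ b ∈ P, ∏ i, ((b i : ℝ))⁻¹ := by
  calc ∫ t, boxMajorant N P t = ∑ b ∈ P, volume.real (simplexBox N b) * boxWeight N b := by
        simp only [boxMajorant,
          integral_finsetSum _ fun b _ => integrable_indicator_simplexBox hN b _,
          integral_indicator_const _ (measurableSet_simplexBox N _), smul_eq_mul]
    _ ≤ ∑ b ∈ P, N⁻¹ ^ m * boxWeight N b := by
        gcongr with b hb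
        · exact boxWeight_nonneg hN (hP b hb)
        · exact ENNReal.toReal_le_of_le_ofReal (by positivity) (volume_simplexBox_le hN b)
    _ = N * ∑ b ∈ P, ∏ i, ((b i : ℝ))⁻¹ := by
        rw [mul_sum]
        refine sum_congr rfl fun b _ => ?_
        rw [boxWeight, ← mul_assoc, inv_pow, pow_succ,
          inv_mul_cancel_left₀ (pow_ne_zero m hN.ne')]

end BoxMajorant

noncomputable def admissibleTuples (N : ℝ) (A : Finset ℤ) (m : ℕ) :
    Finset (Fin (m + 1) → ℤ) :=
  (Fintype.piFinset fun _ => A).filter fun b =>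
    N - ((m + 1 : ℕ) : ℝ) < ((∑ i, b i : ℤ) : ℝ) ∧ ((∑ i, b i : ℤ) : ℝ) < N

lemma prod_inv_simplexLift_le_boxMajorant (hN : 0 < N) {A : Finset ℤ} (hA : ∀ a ∈ A, 0 < a)
    {t : Fin m → ℝ} (ht : ∀ i, simplexLift t i ∈ gridCells N A) :
    ∏ i, (simplexLift t i)⁻¹ ≤ boxMajorant N (admissibleTuples N A m) t := by
  obtain ⟨b, hbA, htb⟩ := exists_mem_simplexBox ht
  have hpos : ∀ b ∈ Fintype.piFinset (fun _ : Fin (m + 1) => A), ∀ i, 0 < b i :=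
    fun b hb i => hA _ (Fintype.mem_piFinset.1 hb i)
  calc ∏ i, (simplexLift t i)⁻¹ ≤ boxWeight N b :=
        prod_inv_simplexLift_le_boxWeight hN (hpos b hbA) htb
    _ = (simplexBox N b).indicator (fun _ => boxWeight N b) t :=
        (Set.indicator_of_mem htb fun _ => boxWeight N b).symm
    _ ≤ _ := single_le_sum (f := fun b => (simplexBox N b).indicator (fun _ => boxWeight N b) t)
        (fun b hb => Set.indicator_nonneg
          (fun _ _ => boxWeight_nonneg hN (hpos b (mem_filter.1 hb).1)) t)
        (mem_filter.2 ⟨hbA, sum_mem_Ioo_of_mem_simplexBox hN htb⟩)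

lemma setIntegral_simplex_gridCells_le (hN : 0 < N) {A : Finset ℤ} (hA : ∀ a ∈ A, 0 < a) :
    ∫ t in {t : Fin m → ℝ | (∀ i, t i ∈ gridCells N A) ∧ 1 - ∑ i, t i ∈ gridCells N A},
        (∏ i, (t i)⁻¹) * (1 - ∑ i, t i)⁻¹ ≤
      N * ∑ b ∈ admissibleTuples N A m, ∏ i, ((b i : ℝ))⁻¹ := by
  simp_rw [← prod_inv_simplexLift, ← forall_simplexLift_mem]
  set D := {t : Fin m → ℝ | ∀ i, simplexLift t i ∈ gridCells N A}
  set P := admissibleTuples N A m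
  have hD : MeasurableSet D :=
    (isOpen_setOf_forall_simplexLift_mem fun _ => isOpen_gridCells N A).measurableSet
  have hP : ∀ b ∈ P, ∀ i, 0 < b i :=
    fun b hb i => hA _ (Fintype.mem_piFinset.1 (mem_filter.1 hb).1 i)
  calc ∫ t in D, ∏ i, (simplexLift t i)⁻¹ ≤ ∫ t in D, boxMajorant N P t :=
        integral_mono_of_nonneg (ae_restrict_of_forall_mem hD fun t ht =>
            prod_nonneg fun i _ => (inv_pos.2 (pos_of_mem_gridCells hN hA (ht i))).le)
          (integrable_boxMajorant hN P).integrableOn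
          (ae_restrict_of_forall_mem hD fun t ht => prod_inv_simplexLift_le_boxMajorant hN hA ht)
    _ ≤ ∫ t, boxMajorant N P t := setIntegral_le_integral (integrable_boxMajorant hN P)
        (Filter.Eventually.of_forall (boxMajorant_nonneg hN hP))
    _ ≤ N * ∑ b ∈ P, ∏ i, ((b i : ℝ))⁻¹ := integral_boxMajorant_le hN hP

end Simplex

lemma exists_sum_le_mul_sum_fiber {ι : Type*} {s : Finset ι} {f : ι → ℤ} (w : ι → ℝ)
    {N : ℝ} {k : ℕ} (hk : 0 < k) (hf : ∀ x ∈ s, N - k < f x ∧ (f x : ℝ) < N) :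
    ∃ n : ℤ, N - k ≤ n ∧ (n : ℝ) ≤ N ∧
      ∑ x ∈ s, w x ≤ k * ∑ x ∈ s with f x = n, w x := by
  set t := Icc (⌈N⌉ - k) (⌈N⌉ - 1)
  have hmaps : ∀ x ∈ s, f x ∈ t := fun x hx => by
    have hlow : ⌈N⌉ ≤ f x + k := Int.ceil_le.2 (by push_cast; linarith [(hf x hx).1])
    have hhigh : f x < ⌈N⌉ := by exact_mod_cast (hf x hx).2.trans_le (Int.le_ceil N)
    exact mem_Icc.2 ⟨by omega, by omega⟩
  have hcard : (#t : ℝ) = k := by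
    rw [Int.card_Icc, sub_add_cancel, sub_sub_cancel, Int.toNat_natCast]
  obtain ⟨n, hn, hle⟩ := exists_le_sum_fiber_of_maps_to_of_nsmul_le_sum hmaps
    (b := (∑ x ∈ s, w x) / k) (nonempty_Icc.2 (by omega))
    (by rw [nsmul_eq_mul, hcard, mul_div_cancel₀ _ (by positivity)])
  obtain ⟨hn₁, hn₂⟩ := mem_Icc.1 hn
  refine ⟨n, ?_, ?_, (div_le_iff₀' (by positivity)).1 hle⟩
  · have : ((⌈N⌉ - k : ℤ) : ℝ) ≤ n := by exact_mod_cast hn₁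
    push_cast at this
    linarith [Int.le_ceil N]
  · have : (n : ℝ) ≤ ((⌈N⌉ - 1 : ℤ) : ℝ) := by exact_mod_cast hn₂
    push_cast at this
    linarith [Int.ceil_lt_add_one N]

lemma exists_setIntegral_simplex_gridCells_le_sum_fiber {N : ℝ} (hN : 0 < N) {A' A : Finset ℤ}
    (hA'A : A' ⊆ A) (hA : ∀ a ∈ A, 0 < a) (m : ℕ) :
    ∃ n : ℤ, N - ((m + 1 : ℕ) : ℝ) ≤ n ∧ (n : ℝ) ≤ N ∧
      ∫ t in {t : Fin m → ℝ | (∀ i, t i ∈ gridCells N A') ∧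
          1 - ∑ i, t i ∈ gridCells N A'}, (∏ i, (t i)⁻¹) * (1 - ∑ i, t i)⁻¹ ≤
        N * ((m + 1 : ℕ) * ∑ b ∈ (Fintype.piFinset fun _ : Fin (m + 1) => A).filter
          (fun b => ∑ i, b i = n), ∏ i, ((b i : ℝ))⁻¹) := by
  obtain ⟨n, hn₁, hn₂, hn⟩ := exists_sum_le_mul_sum_fiber
    (s := admissibleTuples N A' m)
    (fun b => ∏ i, ((b i : ℝ))⁻¹) m.succ_pos fun b hb => (mem_filter.1 hb).2
  refine ⟨n, hn₁, hn₂,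
    (setIntegral_simplex_gridCells_le hN fun a ha => hA a (hA'A ha)).trans ?_⟩
  refine mul_le_mul_of_nonneg_left (hn.trans (mul_le_mul_of_nonneg_left ?_ (by positivity))) hN.le
  refine sum_le_sum_of_subset_of_nonneg (fun b hb => ?_) fun b hb _ => ?_
  · simp only [admissibleTuples, mem_filter, Fintype.mem_piFinset] at hb ⊢
    exact ⟨fun i => hA'A (hb.1.1 i), hb.2⟩
  · have hbA := Fintype.mem_piFinset.1 (mem_filter.1 hb).1
    exact prod_nonneg fun i _ => (inv_pos.2 (Int.cast_pos.2 (hA _ (hbA i)))).le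

lemma natCast_mul_pow_le_exp_mul_pow {k : ℕ} {S J v : ℝ} (hS : 0 ≤ S) (hSJ : S ≤ 2 * J)
    (hk : (k : ℝ) ≤ 3 * v) : k * S ^ k ≤ exp (6 * v) * J ^ k := by
  have hJ : 0 ≤ J := by linarith
  have hk_exp : (k : ℝ) ≤ exp k := by linarith [add_one_le_exp (k : ℝ)]
  have htwo_exp : (2 : ℝ) ^ k ≤ exp k := by
    rw [← exp_one_pow]
    gcongr
    linarith [exp_one_gt_d9]
  calc k * S ^ k ≤ k * (2 * J) ^ k := by gcongr
    _ = k * 2 ^ k * J ^ k := by ring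
    _ ≤ exp k * exp k * J ^ k := by gcongr
    _ = exp (2 * k) * J ^ k := by rw [← exp_add, two_mul]
    _ ≤ exp (6 * v) * J ^ k := by gcongr ?_ * _; exact exp_le_exp.2 (by linarith)

lemma mul_exp_neg_div_mul_pow_le {k : ℕ} (hk : 0 < k) {τ N S J v F : ℝ} (hτ : 0 ≤ τ)
    (hN : 0 < N) (hS : 0 ≤ S) (hSJ : S ≤ 2 * J) (hkv : (k : ℝ) ≤ 3 * v)
    (h : τ * J ^ k ≤ N * (k * F)) : τ * exp (-(6 * v)) / N * S ^ k ≤ F := by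
  rw [← mul_le_mul_iff_of_pos_right (by positivity : 0 < exp (6 * v) * N * k)]
  calc τ * exp (-(6 * v)) / N * S ^ k * (exp (6 * v) * N * k) = τ * (k * S ^ k) := by
        rw [exp_neg]; field_simp
    _ ≤ τ * (exp (6 * v) * J ^ k) :=
        mul_le_mul_of_nonneg_left (natCast_mul_pow_le_exp_mul_pow hS hSJ hkv) hτ
    _ = exp (6 * v) * (τ * J ^ k) := by ring
    _ ≤ exp (6 * v) * (N * (k * F)) := by gcongr
    _ = F * (exp (6 * v) * N * k) := by ring

theorem stmt_11 (lam₃ : ℝ) (hlam₃ : 0 < lam₃) (τ : ℝ → ℝ) (hτ : ∀ v, 0 < τ v)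
    (hypT : ∀ u v : ℝ, 1 ≤ u → u ≤ v → ∀ T : Set ℝ, IsOpen T →
      T ⊆ Set.Ioo (1 / (Real.exp 1 * v)) (1 / u) →
      (1 + lam₃) / u ≤ ∫ t in T, 1 / t →
      ∃ k : ℕ, u ≤ (k : ℝ) ∧ (k : ℝ) ≤ Real.exp 1 * v ∧
        (∫ t in {t : Fin (k - 1) → ℝ | (∀ i, t i ∈ T) ∧ (1 - ∑ i, t i) ∈ T},
            (∏ i, (t i)⁻¹) * (1 - ∑ i, t i)⁻¹) ≥
          τ v * (∫ t in T, 1 / t) ^ k) :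
    ∃ C₂ C : ℝ, 0 < C₂ ∧ 0 < C ∧
      ∀ N u v : ℝ, 1 ≤ u → u ≤ v → v ^ 2 ≤ (2 * lam₃) * N / C₂ →
      ∀ A : Finset ℤ, (∀ a ∈ A, N / (Real.exp 1 * v) < (a : ℝ) ∧ (a : ℝ) ≤ N / u) →
      (1 + 2 * lam₃) / u ≤ ∑ a ∈ A, 1 / (a : ℝ) →
      ∃ (k : ℕ) (n : ℤ), u ≤ (k : ℝ) ∧ (k : ℝ) ≤ Real.exp 1 * v ∧
        N - k ≤ (n : ℝ) ∧ (n : ℝ) ≤ N ∧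
        ∑ a ∈ (Fintype.piFinset fun _ : Fin k => A).filter (fun a => ∑ i, a i = n),
            ∏ i, ((a i : ℝ))⁻¹ ≥
          (τ v * Real.exp (-(C * v)) / N) * (∑ a ∈ A, 1 / (a : ℝ)) ^ k := by
  refine ⟨4 * exp 1 ^ 2, 6, by positivity, by norm_num, ?_⟩
  intro N u v hu huv hN A hA hS
  have hu0 : 0 < u := by linarith
  have hv0 : 0 < v := by linarith
  have hvN : 2 * (exp 1 * v) ^ 2 ≤ lam₃ * N := by
    rw [le_div_iff₀ (by positivity)] at hN
    linarith
  have hN0 : 0 < N := pos_of_mul_pos_right ((by positivity : (0 : ℝ) < _).trans_le hvN) hlam₃.le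
  have hApos : ∀ a ∈ A, 0 < a := fun a ha => by
    exact_mod_cast (by positivity : (0 : ℝ) < N / (exp 1 * v)).trans (hA a ha).1
  set A' := A.filter fun a : ℤ => (a : ℝ) + 1 ≤ N / u
  have hSJ : ∑ a ∈ A, 1 / (a : ℝ) - lam₃ / u ≤ ∫ t in gridCells N A', 1 / t :=
    (sum_one_div_sub_le_sum_filter_one_div_add_one_of_mem_Ioc hN0 hu0
      (huv.trans (le_mul_of_one_le_left hv0.le (one_le_exp zero_le_one))) hvN hA).trans
      (sum_one_div_add_one_le_integral_one_div_gridCells hN0 fun a ha =>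
        hApos a (mem_filter.1 ha).1)
  have hlamS : 2 * (lam₃ / u) ≤ ∑ a ∈ A, 1 / (a : ℝ) := by
    refine le_trans ?_ hS
    rw [← mul_div_assoc]
    gcongr
    linarith
  obtain ⟨k, hku, hkv, hk⟩ := hypT u v hu huv _ (isOpen_gridCells N A')
    (gridCells_filter_subset_Ioo hN0 hu0 (by positivity) fun a ha => (hA a ha).1)
    (by linarith [(by ring : (1 + lam₃) / u = (1 + 2 * lam₃) / u - lam₃ / u)])
  obtain ⟨m, rfl⟩ : ∃ m, k = m + 1 :=
    Nat.exists_eq_add_one.2 (by exact_mod_cast hu0.trans_le hku)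
  obtain ⟨n, hn₁, hn₂, hn⟩ :=
    exists_setIntegral_simplex_gridCells_le_sum_fiber hN0 (filter_subset _ A : A' ⊆ A) hApos m
  exact ⟨m + 1, n, hku, hkv, hn₁, hn₂, mul_exp_neg_div_mul_pow_le m.succ_pos (hτ v).le hN0
    ((by positivity : 0 ≤ 2 * (lam₃ / u)).trans hlamS) (by linarith)
    (hkv.trans (by nlinarith [exp_one_lt_d9])) (hk.trans hn)⟩
end
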